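/- arXiv:0708.2658 — 11 statements merged into one kernel-verified Lean document; each statement's English description precedes it below -/
import Mathlib

section
/- Let S be a positive hypergraph and k a natural number. Then the relation <^{S_{k+1},-} (the transitive closure of a ⊲⁻ b iff γ(a) ∈ δ(b) on S_{k+1}) is a strict partial order if and only if the relation <^{S_k,+} (the transitive closure of a ⊲⁺ b iff there exists α ∈ S_{k+1} with a ∈ δ(α) and γ(α) = b) is a strict partial order. -/
/-- A pre-hypergraph: dimension-indexed finite sets of faces together with
codomain functions `gam k : S_{k+1} → S_k` and domain assignments
`del k : S_{k+1} → Finset S_k`. -/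
structure PreHG where
  faces : ℕ → Finset ℕ
  gam : ℕ → ℕ → ℕ
  del : ℕ → ℕ → Finset ℕ

namespace PreHG

/-- δ extended to sets of faces. -/
def delS (S : PreHG) (k : ℕ) (A : Finset ℕ) : Finset ℕ := A.biUnion (S.del k)

/-- γ extended to sets of faces. -/
def gamS (S : PreHG) (k : ℕ) (A : Finset ℕ) : Finset ℕ := A.image (S.gam k)

/-- The set `ι(a) = δδ(a) ∩ γδ(a)` of internal faces of a face `a` of dimension `k+2`
(the result lives in dimension `k`). -/
def iota (S : PreHG) (k : ℕ) (a : ℕ) : Finset ℕ :=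
  S.delS k (S.del (k+1) a) ∩ S.gamS k (S.del (k+1) a)

/-- One step of the upper order: `a ⊲⁺ b` on faces of dimension `k`:
there is `α` of dimension `k+1` with `a ∈ δ(α)` and `γ(α) = b`. -/
def ltPlusOne (S : PreHG) (k : ℕ) (a b : ℕ) : Prop :=
  ∃ α ∈ S.faces (k+1), a ∈ S.del k α ∧ S.gam k α = b

/-- The upper order `<⁺` on faces of dimension `k` (transitive closure of `⊲⁺`). -/
def ltPlus (S : PreHG) (k : ℕ) : ℕ → ℕ → Prop :=
  Relation.TransGen (S.ltPlusOne k)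

/-- One step of the lower order: `a ⊲⁻ b` iff `γ(a) ∈ δ(b)`, on faces of dimension `k`
(the empty relation in dimension 0). -/
def ltMinusOne (S : PreHG) : ℕ → ℕ → ℕ → Prop
  | 0, _, _ => False
  | (k+1), a, b => a ∈ S.faces (k+1) ∧ b ∈ S.faces (k+1) ∧ S.gam k a ∈ S.del k b

/-- The lower order `<⁻` on faces of dimension `k` (transitive closure of `⊲⁻`). -/
def ltMinus (S : PreHG) (k : ℕ) : ℕ → ℕ → Prop :=
  Relation.TransGen (S.ltMinusOne k)

/-- Comparability in the upper order. -/
def perpPlus (S : PreHG) (k : ℕ) (a b : ℕ) : Prop := S.ltPlus k a b ∨ S.ltPlus k b a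

/-- Comparability in the lower order. -/
def perpMinus (S : PreHG) (k : ℕ) (a b : ℕ) : Prop := S.ltMinus k a b ∨ S.ltMinus k b a

/-- Iterated codomain `γ^{(l)}`: maps a face of dimension `l+m` down to dimension `l`. -/
def gDown (S : PreHG) (l : ℕ) : ℕ → ℕ → ℕ
  | 0, a => a
  | (m+1), a => gDown S l m (S.gam (l+m) a)

/-- The axioms of a positive hypergraph. -/
def IsHG (S : PreHG) : Prop :=
  (∀ k a, a ∈ S.faces (k+1) → S.gam k a ∈ S.faces k) ∧
  (∀ k a, a ∈ S.faces (k+1) → S.del k a ⊆ S.faces k) ∧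
  (∀ k a, a ∈ S.faces (k+1) → (S.del k a).Nonempty) ∧
  (∀ a ∈ S.faces 1, (S.del 0 a).card = 1) ∧
  (∃ N, ∀ k, N ≤ k → S.faces k = ∅)

/-- Globularity: for faces of dimension ≥ 2,
`{γγ(a)} = γδ(a) − δδ(a)` and `δγ(a) = δδ(a) − γδ(a)`. -/
def Globular (S : PreHG) : Prop :=
  ∀ k a, a ∈ S.faces (k+2) →
    ({S.gam k (S.gam (k+1) a)} : Finset ℕ)
        = S.gamS k (S.del (k+1) a) \ S.delS k (S.del (k+1) a) ∧
      S.del k (S.gam (k+1) a)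
        = S.delS k (S.del (k+1) a) \ S.gamS k (S.del (k+1) a)

/-- Strictness: `<⁺` is irreflexive in every dimension. -/
def StrictPlus (S : PreHG) : Prop := ∀ k, ∀ a ∈ S.faces k, ¬ S.ltPlus k a a

/-- `<⁺` is linear in dimension 0. -/
def LinearZero (S : PreHG) : Prop :=
  ∀ a ∈ S.faces 0, ∀ b ∈ S.faces 0, a = b ∨ S.ltPlus 0 a b ∨ S.ltPlus 0 b a

/-- Disjointness: no two faces of positive dimension are comparable in both orders. -/
def Disjointness (S : PreHG) : Prop :=
  ∀ k a b, a ∈ S.faces (k+1) → b ∈ S.faces (k+1) →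
    ¬ (S.perpPlus (k+1) a b ∧ S.perpMinus (k+1) a b)

/-- Pencil linearity: γ-fibers and δ-fibers are linearly ordered by `<⁺`. -/
def Pencil (S : PreHG) : Prop :=
  ∀ k x,
    (∀ a b, a ∈ S.faces (k+1) → b ∈ S.faces (k+1) →
      S.gam k a = x → S.gam k b = x → a = b ∨ S.perpPlus (k+1) a b) ∧
    (∀ a b, a ∈ S.faces (k+1) → b ∈ S.faces (k+1) →
      x ∈ S.del k a → x ∈ S.del k b → a = b ∨ S.perpPlus (k+1) a b)

/-- A positive face structure: a nonempty positive hypergraph satisfying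
globularity, strictness, disjointness and pencil linearity. -/
def IsPFS (S : PreHG) : Prop :=
  S.IsHG ∧ (S.faces 0).Nonempty ∧ S.Globular ∧ S.StrictPlus ∧ S.LinearZero ∧
    S.Disjointness ∧ S.Pencil

end PreHG

/-!
Both relations are transitive closures, so only irreflexivity is at stake. If `a ⊲⁻ b` then
`b` itself witnesses `γ a ⊲⁺ γ b`, so `γ` maps a `<⁻`-cycle to a `<⁺`-cycle. Conversely, the
witnesses `α₁, …, αₙ` of a `⊲⁺`-chain satisfy `γ αᵢ ∈ δ αᵢ₊₁`, i.e. they form a `⊲⁻`-chain,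
and a `<⁺`-cycle closes it up into a `<⁻`-cycle.
-/

namespace PreHG

variable (S : PreHG) {k : ℕ}

theorem ltPlusOne_gam_of_ltMinusOne {a b : ℕ} (h : S.ltMinusOne (k+1) a b) :
    S.ltPlusOne k (S.gam k a) (S.gam k b) :=
  ⟨b, h.2.1, h.2.2, rfl⟩

theorem ltPlus_gam_of_ltMinus {a b : ℕ} (h : S.ltMinus (k+1) a b) :
    S.ltPlus k (S.gam k a) (S.gam k b) :=
  Relation.TransGen.lift (S.gam k) (fun _ _ => S.ltPlusOne_gam_of_ltMinusOne) a b h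

theorem exists_reflTransGen_ltMinusOne_of_ltPlus {x y : ℕ} (h : S.ltPlus k x y) :
    ∃ α ∈ S.faces (k+1), ∃ β ∈ S.faces (k+1), x ∈ S.del k α ∧ S.gam k β = y ∧
      Relation.ReflTransGen (S.ltMinusOne (k+1)) α β := by
  induction h with
  | single h =>
    obtain ⟨α, hα, hxα, rfl⟩ := h
    exact ⟨α, hα, α, hα, hxα, rfl, .refl⟩
  | tail _ hyz ih =>
    obtain ⟨α, hα, β, hβ, hxα, rfl, hαβ⟩ := ih
    obtain ⟨β', hβ', hγβ, rfl⟩ := hyz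
    exact ⟨α, hα, β', hβ', hxα, rfl, hαβ.tail ⟨hβ, hβ', hγβ⟩⟩

theorem exists_ltMinus_self_of_ltPlus_self {x : ℕ} (h : S.ltPlus k x x) :
    ∃ β ∈ S.faces (k+1), S.ltMinus (k+1) β β := by
  obtain ⟨α, hα, β, hβ, hxα, hβx, hαβ⟩ := S.exists_reflTransGen_ltMinusOne_of_ltPlus h
  have hβα : S.ltMinusOne (k+1) β α := ⟨hβ, hα, hβx ▸ hxα⟩
  exact ⟨β, hβ, Relation.TransGen.head' hβα hαβ⟩

theorem irrefl_ltMinus_iff_irrefl_ltPlus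
    (hgam : ∀ a ∈ S.faces (k+1), S.gam k a ∈ S.faces k) :
    (∀ a ∈ S.faces (k+1), ¬ S.ltMinus (k+1) a a) ↔ (∀ x ∈ S.faces k, ¬ S.ltPlus k x x) := by
  constructor
  · intro hirr x _ hx
    obtain ⟨β, hβ, hββ⟩ := S.exists_ltMinus_self_of_ltPlus_self hx
    exact hirr β hβ hββ
  · intro hirr a ha haa
    exact hirr _ (hgam a ha) (S.ltPlus_gam_of_ltMinus haa)

end PreHG

/-- In a positive hypergraph, `<⁻` on `S_{k+1}` is a strict partial order
iff `<⁺` on `S_k` is a strict partial order. -/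
theorem stmt0 (S : PreHG) (hS : S.IsHG) (k : ℕ) :
    ((∀ a ∈ S.faces (k+1), ¬ S.ltMinus (k+1) a a) ∧
      (∀ a b c, S.ltMinus (k+1) a b → S.ltMinus (k+1) b c → S.ltMinus (k+1) a c)) ↔
    ((∀ a ∈ S.faces k, ¬ S.ltPlus k a a) ∧
      (∀ a b c, S.ltPlus k a b → S.ltPlus k b c → S.ltPlus k a c)) := by
  have minus_trans : ∀ a b c, S.ltMinus (k+1) a b → S.ltMinus (k+1) b c →
      S.ltMinus (k+1) a c := fun _ _ _ => Relation.TransGen.trans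
  have plus_trans : ∀ a b c, S.ltPlus k a b → S.ltPlus k b c → S.ltPlus k a c :=
    fun _ _ _ => Relation.TransGen.trans
  rw [and_iff_left minus_trans, and_iff_left plus_trans]
  exact S.irrefl_ltMinus_iff_irrefl_ltPlus (hS.1 k)
end

section
/- Let S be a positive face structure and a ∈ S_n with n > 2. Then δδγ(a) = δδδ(a), i.e. the set of faces obtained by applying δ twice to γ(a) equals the set obtained by applying δ three times to a. -/
/-- For `a ∈ S_n`, `n > 2`: `δδγ(a) = δδδ(a)`. -/
theorem stmt2 (S : PreHG) (hS : S.IsPFS) (k a : ℕ) (ha : a ∈ S.faces (k+3)) :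
    S.delS k (S.del (k+1) (S.gam (k+2) a)) =
      S.delS k (S.delS (k+1) (S.del (k+2) a)) := by
  classical
  obtain ⟨hg, -, glob, strict, -, -, -⟩ := hS
  obtain ⟨hgam, hdel, -, -, -⟩ := hg
  have haD : S.del (k+2) a ⊆ S.faces (k+2) := hdel _ _ ha
  have hga : S.gam (k+2) a ∈ S.faces (k+2) := hgam _ _ ha
  have hglobA := (glob (k+1) a ha).2
  set m : ℕ → ℕ := fun x =>
    ((S.faces (k+1)).filter (fun z => S.ltPlus (k+1) z (S.gam (k+1) x))).card with hm
  have key : ∀ n : ℕ, ∀ x ∈ S.del (k+2) a, m x = n →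
      S.delS k (S.del (k+1) x) ⊆ S.delS k (S.del (k+1) (S.gam (k+2) a)) := by
    intro n
    induction n using Nat.strong_induction_on with
    | _ n ih =>
      intro x hx hmx u hu
      obtain ⟨y, hy, hu'⟩ := Finset.mem_biUnion.1 hu
      by_cases hyg : y ∈ S.gamS (k+1) (S.del (k+2) a)
      · obtain ⟨x', hx', hxy⟩ := Finset.mem_image.1 hyg
        have hstep : S.ltPlusOne (k+1) (S.gam (k+1) x') (S.gam (k+1) x) :=
          ⟨x, haD hx, by rw [hxy]; exact hy, rfl⟩
        have hgx'f : S.gam (k+1) x' ∈ S.faces (k+1) := hgam _ _ (haD hx')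
        have hlt : m x' < m x := by
          apply Finset.card_lt_card
          constructor
          · intro z hz
            rw [Finset.mem_filter] at hz ⊢
            exact ⟨hz.1, hz.2.tail hstep⟩
          · intro hsub
            have h1 : S.gam (k+1) x' ∈
                (S.faces (k+1)).filter (fun z => S.ltPlus (k+1) z (S.gam (k+1) x)) :=
              Finset.mem_filter.2 ⟨hgx'f, Relation.TransGen.single hstep⟩
            exact strict (k+1) _ hgx'f (Finset.mem_filter.1 (hsub h1)).2
        have hgx' := (glob k x' (haD hx')).2
        have hu2 : u ∈ S.delS k (S.del (k+1) x') := by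
          have h3 : u ∈ S.del k (S.gam (k+1) x') := by rw [hxy]; exact hu'
          rw [hgx'] at h3
          exact (Finset.mem_sdiff.1 h3).1
        exact ih (m x') (hmx ▸ hlt) x' hx' rfl hu2
      · have hyd : y ∈ S.delS (k+1) (S.del (k+2) a) :=
          Finset.mem_biUnion.2 ⟨x, hx, hy⟩
        have : y ∈ S.del (k+1) (S.gam (k+2) a) := by
          rw [hglobA]; exact Finset.mem_sdiff.2 ⟨hyd, hyg⟩
        exact Finset.mem_biUnion.2 ⟨y, this, hu'⟩
  apply Finset.Subset.antisymm
  · intro u hu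
    obtain ⟨y, hy, hu'⟩ := Finset.mem_biUnion.1 hu
    rw [hglobA] at hy
    obtain ⟨hyd, -⟩ := Finset.mem_sdiff.1 hy
    exact Finset.mem_biUnion.2 ⟨y, hyd, hu'⟩
  · intro u hu
    obtain ⟨y, hy, hu'⟩ := Finset.mem_biUnion.1 hu
    obtain ⟨x, hx, hy'⟩ := Finset.mem_biUnion.1 hy
    exact key (m x) x hx rfl (Finset.mem_biUnion.2 ⟨y, hy', hu'⟩)
end

section
/- Let S be a positive face structure and a ∈ S_n with n > 2. Then γδγ(a) = γδδ(a). -/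
lemma key3 (S : PreHG) (hS : S.IsPFS) (k a : ℕ) (ha : a ∈ S.faces (k+3)) :
    ∀ t ∈ S.delS (k+1) (S.del (k+2) a),
      ∃ t' ∈ S.del (k+1) (S.gam (k+2) a), S.gam k t' = S.gam k t := by
  classical
  obtain ⟨⟨hgam, hdel, hne, _, _⟩, _, hglob, hstrict, _, _, _⟩ := hS
  suffices H : ∀ n t, ((S.faces (k+1)).filter (fun v => S.ltPlus (k+1) v t)).card = n →
      t ∈ S.delS (k+1) (S.del (k+2) a) →
      ∃ t' ∈ S.del (k+1) (S.gam (k+2) a), S.gam k t' = S.gam k t by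
    intro t ht; exact H _ t rfl ht
  intro n
  induction n using Nat.strong_induction_on with
  | _ n IH =>
    intro t hcard ht
    by_cases hγ : t ∈ S.gamS (k+1) (S.del (k+2) a)
    · obtain ⟨b, hb, rfl⟩ := Finset.mem_image.mp hγ
      have hbF : b ∈ S.faces (k+2) := hdel _ _ ha hb
      have hmem : S.gam k (S.gam (k+1) b)
          ∈ S.gamS k (S.del (k+1) b) \ S.delS k (S.del (k+1) b) := by
        rw [← (hglob k b hbF).1]; simp
      obtain ⟨u, hu, hgu⟩ := Finset.mem_image.mp (Finset.mem_sdiff.mp hmem).1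
      have huδδ : u ∈ S.delS (k+1) (S.del (k+2) a) := Finset.mem_biUnion.mpr ⟨b, hb, hu⟩
      have huF : u ∈ S.faces (k+1) := hdel _ _ hbF hu
      have hlt : S.ltPlus (k+1) u (S.gam (k+1) b) :=
        Relation.TransGen.single ⟨b, hbF, hu, rfl⟩
      have hsub : (S.faces (k+1)).filter (fun v => S.ltPlus (k+1) v u)
          ⊂ (S.faces (k+1)).filter (fun v => S.ltPlus (k+1) v (S.gam (k+1) b)) := by
        refine Finset.ssubset_iff_of_subset ?_ |>.mpr ⟨u, ?_, ?_⟩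
        · intro v hv
          rcases Finset.mem_filter.mp hv with ⟨hvF, hvlt⟩
          exact Finset.mem_filter.mpr ⟨hvF, hvlt.trans hlt⟩
        · exact Finset.mem_filter.mpr ⟨huF, hlt⟩
        · intro hcon
          exact hstrict (k+1) u huF (Finset.mem_filter.mp hcon).2
      have hcardlt : ((S.faces (k+1)).filter (fun v => S.ltPlus (k+1) v u)).card < n := by
        rw [← hcard]; exact Finset.card_lt_card hsub
      obtain ⟨t', ht', he⟩ := IH _ hcardlt u rfl huδδ
      exact ⟨t', ht', he.trans hgu⟩
    · refine ⟨t, ?_, rfl⟩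
      rw [(hglob (k+1) a ha).2]
      exact Finset.mem_sdiff.mpr ⟨ht, hγ⟩

/-- For `a ∈ S_n`, `n > 2`: `γδγ(a) = γδδ(a)`. -/
theorem stmt3 (S : PreHG) (hS : S.IsPFS) (k a : ℕ) (ha : a ∈ S.faces (k+3)) :
    S.gamS k (S.del (k+1) (S.gam (k+2) a)) =
      S.gamS k (S.delS (k+1) (S.del (k+2) a)) := by
  ext x
  simp only [PreHG.gamS, Finset.mem_image]
  constructor
  · rintro ⟨t, ht, rfl⟩
    have := (hS.2.2.1 (k+1) a ha).2
    rw [this] at ht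
    have ht' := (Finset.mem_sdiff.mp ht).1
    exact ⟨t, ht', rfl⟩
  · rintro ⟨t, ht, rfl⟩
    obtain ⟨t', ht', he⟩ := key3 S hS k a ha t ht
    exact ⟨t', ht', he⟩
end

section
/- Let S be a positive face structure, k > 0, α ∈ S_k, and a₁, a₂ ∈ δ(α) with a₁ ≠ a₂. Then a₁ and a₂ are incomparable under <⁺; moreover δ(a₁) ∩ δ(a₂) = ∅ and γ(a₁) ≠ γ(a₂). -/
namespace PreHG

theorem aux_minus_to_plus (S : PreHG) (k : ℕ) {x y : ℕ}
    (h : S.ltMinus (k+2) x y) : S.ltPlus (k+1) (S.gam (k+1) x) (S.gam (k+1) y) := by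
  induction h with
  | single h1 =>
      simp only [ltMinusOne] at h1
      exact Relation.TransGen.single ⟨_, h1.2.1, h1.2.2, rfl⟩
  | tail h1 h2 ih =>
      simp only [ltMinusOne] at h2
      exact ih.tail ⟨_, h2.2.1, h2.2.2, rfl⟩

theorem aux_chain (S : PreHG) (k : ℕ) {a b : ℕ}
    (h : S.ltPlus (k+1) a b) :
    ∃ β β', β ∈ S.faces (k+2) ∧ β' ∈ S.faces (k+2) ∧ a ∈ S.del (k+1) β ∧
      S.gam (k+1) β' = b ∧ (β = β' ∨ S.ltMinus (k+2) β β') := by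
  induction h with
  | single h1 =>
      obtain ⟨β, hβ, hm, hg⟩ := h1
      exact ⟨β, β, hβ, hβ, hm, hg, Or.inl rfl⟩
  | tail h1 h2 ih =>
      obtain ⟨β, β', hβ, hβ', hm, hg, hc⟩ := ih
      obtain ⟨β'', hβ'', hm'', hg''⟩ := h2
      have step : S.ltMinusOne (k+2) β' β'' := by
        simp only [ltMinusOne]; exact ⟨hβ', hβ'', hg ▸ hm''⟩
      refine ⟨β, β'', hβ, hβ'', hm, hg'', ?_⟩
      rcases hc with rfl | hc
      · exact Or.inr (Relation.TransGen.single step)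
      · exact Or.inr (hc.tail step)

theorem aux_incomp (S : PreHG) (hS : S.IsPFS) (k α a₁ a₂ : ℕ)
    (hα : α ∈ S.faces (k+2)) (h1 : a₁ ∈ S.del (k+1) α) (h2 : a₂ ∈ S.del (k+1) α)
    (hlt : S.ltPlus (k+1) a₁ a₂) : False := by
  obtain ⟨hHG, hne0, hGlob, hStrict, hLin0, hDisj, hPencil⟩ := hS
  obtain ⟨β, β', hβ, hβ', hm, hg, hc⟩ := aux_chain S k hlt
  have step : S.ltMinusOne (k+2) β' α := by
    simp only [ltMinusOne]; exact ⟨hβ', hα, hg ▸ h2⟩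
  have hβα : S.ltMinus (k+2) β α := by
    rcases hc with rfl | hc
    · exact Relation.TransGen.single step
    · exact hc.tail step
  rcases (hPencil (k+1) a₁).2 β α hβ hα hm h1 with rfl | hperp
  · exact hStrict (k+1) _ (hHG.1 (k+1) β hβ) (aux_minus_to_plus S k hβα)
  · exact hDisj (k+1) β α hβ hα ⟨hperp, Or.inl hβα⟩

end PreHG

/-- If `α ∈ S_k` (`k > 0`) and `a₁ ≠ a₂` both lie in `δ(α)`, then `a₁, a₂`
are `<⁺`-incomparable, `δ(a₁) ∩ δ(a₂) = ∅` and `γ(a₁) ≠ γ(a₂)`. -/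
theorem stmt4 (S : PreHG) (hS : S.IsPFS) (k α a₁ a₂ : ℕ)
    (hα : α ∈ S.faces (k+2))
    (h1 : a₁ ∈ S.del (k+1) α) (h2 : a₂ ∈ S.del (k+1) α) (hne : a₁ ≠ a₂) :
    ¬ S.perpPlus (k+1) a₁ a₂ ∧
    S.del k a₁ ∩ S.del k a₂ = ∅ ∧
    S.gam k a₁ ≠ S.gam k a₂ := by
  have hincomp : ¬ S.perpPlus (k+1) a₁ a₂ := by
    rintro (h | h)
    · exact PreHG.aux_incomp S hS k α a₁ a₂ hα h1 h2 h
    · exact PreHG.aux_incomp S hS k α a₂ a₁ hα h2 h1 h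
  obtain ⟨hHG, hne0, hGlob, hStrict, hLin0, hDisj, hPencil⟩ := hS
  have hf1 : a₁ ∈ S.faces (k+1) := hHG.2.1 (k+1) α hα h1
  have hf2 : a₂ ∈ S.faces (k+1) := hHG.2.1 (k+1) α hα h2
  refine ⟨hincomp, ?_, ?_⟩
  · by_contra h
    obtain ⟨x, hx⟩ := Finset.nonempty_of_ne_empty h
    rw [Finset.mem_inter] at hx
    rcases (hPencil k x).2 a₁ a₂ hf1 hf2 hx.1 hx.2 with h' | h'
    · exact hne h'
    · exact hincomp h'
  · intro h
    rcases (hPencil k (S.gam k a₂)).1 a₁ a₂ hf1 hf2 h rfl with h' | h'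
    · exact hne h'
    · exact hincomp h'
end

section
/- Let S be a positive face structure, n > 1, and a, b ∈ S_n with a <⁺ b. Then ι(a) ⊆ ι(b), where ι(x) = δδ(x) ∩ γδ(x) is the set of internal faces of x. Moreover δδ(a) ⊆ δδ(b) and ι(a) ∪ {γγ(a)} ⊆ ι(b) ∪ {γγ(b)}. -/
namespace PreHG

/-- A `⊲⁻` step induces a `⊲⁺` step one dimension down via `γ`. -/
lemma ltMinus_gam_ltPlus (S : PreHG) {k x y : ℕ} (h : S.ltMinus (k+1) x y) :
    S.ltPlus k (S.gam k x) (S.gam k y) := by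
  induction h with
  | single h => exact Relation.TransGen.single ⟨_, h.2.1, h.2.2, rfl⟩
  | tail _ h ih => exact Relation.TransGen.tail ih ⟨_, h.2.1, h.2.2, rfl⟩

/-- `<⁻` is irreflexive (as a consequence of strictness of `<⁺`). -/
lemma ltMinus_irrefl (S : PreHG)
    (hstrict : S.StrictPlus)
    (hgam : ∀ k a, a ∈ S.faces (k+1) → S.gam k a ∈ S.faces k)
    {k c : ℕ} (hc : c ∈ S.faces (k+1)) : ¬ S.ltMinus (k+1) c c :=
  fun h => hstrict k (S.gam k c) (hgam k c hc) (S.ltMinus_gam_ltPlus h)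

/-- The one-step version: if `a ⊲⁺ b` in dimension `k+2` then
`δδ(a) ⊆ δδ(b)` and `γδ(a) ⊆ γδ(b)`. -/
lemma stmt7_step (S : PreHG) (hS : S.IsPFS) {k a b : ℕ}
    (hab : S.ltPlusOne (k+2) a b) :
    S.delS k (S.del (k+1) a) ⊆ S.delS k (S.del (k+1) b) ∧
    S.gamS k (S.del (k+1) a) ⊆ S.gamS k (S.del (k+1) b) := by
  classical
  obtain ⟨⟨hgam, hdel, -, -, -⟩, -, hglob, hstrict, -⟩ := hS
  obtain ⟨α, hα, haα, hγα⟩ := hab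
  subst hγα
  set b := S.gam (k+2) α with hb
  have hdb : S.del (k+1) b =
      S.delS (k+1) (S.del (k+2) α) \ S.gamS (k+1) (S.del (k+2) α) :=
    (hglob (k+1) α hα).2
  have hsubF : S.del (k+2) α ⊆ S.faces (k+2) := hdel (k+2) α hα
  -- split a face of `δδ(α)` according to globularity at `α`
  have hsplit : ∀ t, t ∈ S.delS (k+1) (S.del (k+2) α) →
      t ∈ S.del (k+1) b ∨ ∃ c ∈ S.del (k+2) α, S.gam (k+1) c = t := by
    intro t ht
    by_cases hg : t ∈ S.gamS (k+1) (S.del (k+2) α)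
    · right
      simpa [PreHG.gamS, Finset.mem_image] using hg
    · left
      rw [hdb]
      exact Finset.mem_sdiff.mpr ⟨ht, hg⟩
  -- the measure for the descent along `⊲⁻`
  set m : ℕ → ℕ :=
    fun c => ((S.faces (k+2)).filter (fun d => S.ltMinus (k+2) d c)).card with hm
  have hmdec : ∀ c c', S.ltMinusOne (k+2) c' c → m c' < m c := by
    intro c c' h
    have h' : c' ∈ S.faces (k+2) ∧ c ∈ S.faces (k+2) ∧
        S.gam (k+1) c' ∈ S.del (k+1) c := h
    apply Finset.card_lt_card
    rw [Finset.ssubset_iff_of_subset]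
    · refine ⟨c', Finset.mem_filter.mpr ⟨h'.1, Relation.TransGen.single h⟩, ?_⟩
      intro hc'
      exact S.ltMinus_irrefl hstrict hgam h'.1 (Finset.mem_filter.mp hc').2
    · intro d hd
      rw [Finset.mem_filter] at hd ⊢
      exact ⟨hd.1, hd.2.tail h⟩
  -- the descent
  have key : ∀ n c, c ∈ S.del (k+2) α → m c ≤ n →
      ((∀ x ∈ S.del k (S.gam (k+1) c), x ∈ S.delS k (S.del (k+1) b)) ∧
        S.gam k (S.gam (k+1) c) ∈ S.gamS k (S.del (k+1) b)) := by
    intro n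
    induction n using Nat.strong_induction_on with
    | _ n ih =>
      intro c hcα hmc
      have hcF : c ∈ S.faces (k+2) := hsubF hcα
      have hc1 := (hglob k c hcF).1
      have hc2 := (hglob k c hcF).2
      constructor
      · intro x hx
        rw [hc2, Finset.mem_sdiff] at hx
        obtain ⟨hx1, hx2⟩ := hx
        obtain ⟨u, huc, hxu⟩ := Finset.mem_biUnion.mp hx1
        have huα : u ∈ S.delS (k+1) (S.del (k+2) α) :=
          Finset.mem_biUnion.mpr ⟨c, hcα, huc⟩
        rcases hsplit u huα with hub | ⟨c', hc'α, hγc'⟩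
        · exact Finset.mem_biUnion.mpr ⟨u, hub, hxu⟩
        · have hstep : S.ltMinusOne (k+2) c' c :=
            ⟨hsubF hc'α, hcF, by rw [hγc']; exact huc⟩
          have hxc' : x ∈ S.del k (S.gam (k+1) c') := by rw [hγc']; exact hxu
          exact (ih (m c') (lt_of_lt_of_le (hmdec c c' hstep) hmc) c' hc'α le_rfl).1 x hxc'
      · have hmem : S.gam k (S.gam (k+1) c) ∈ S.gamS k (S.del (k+1) c) := by
          have : S.gam k (S.gam (k+1) c) ∈
              ({S.gam k (S.gam (k+1) c)} : Finset ℕ) := Finset.mem_singleton_self _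
          rw [hc1, Finset.mem_sdiff] at this
          exact this.1
        obtain ⟨u, huc, hγu⟩ := Finset.mem_image.mp hmem
        have huα : u ∈ S.delS (k+1) (S.del (k+2) α) :=
          Finset.mem_biUnion.mpr ⟨c, hcα, huc⟩
        rcases hsplit u huα with hub | ⟨c', hc'α, hγc'⟩
        · exact Finset.mem_image.mpr ⟨u, hub, hγu⟩
        · have hstep : S.ltMinusOne (k+2) c' c :=
            ⟨hsubF hc'α, hsubF hcα, by rw [hγc']; exact huc⟩
          have := (ih (m c') (lt_of_lt_of_le (hmdec c c' hstep) hmc) c' hc'α le_rfl).2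
          rw [hγc', hγu] at this
          exact this
  constructor
  · intro x hx
    obtain ⟨t, hta, hxt⟩ := Finset.mem_biUnion.mp hx
    have htα : t ∈ S.delS (k+1) (S.del (k+2) α) :=
      Finset.mem_biUnion.mpr ⟨a, haα, hta⟩
    rcases hsplit t htα with htb | ⟨c, hcα, hγc⟩
    · exact Finset.mem_biUnion.mpr ⟨t, htb, hxt⟩
    · exact (key (m c) c hcα le_rfl).1 x (by rw [hγc]; exact hxt)
  · intro x hx
    obtain ⟨t, hta, hγt⟩ := Finset.mem_image.mp hx
    have htα : t ∈ S.delS (k+1) (S.del (k+2) α) :=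
      Finset.mem_biUnion.mpr ⟨a, haα, hta⟩
    rcases hsplit t htα with htb | ⟨c, hcα, hγc⟩
    · exact Finset.mem_image.mpr ⟨t, htb, hγt⟩
    · have := (key (m c) c hcα le_rfl).2
      rw [hγc, hγt] at this
      exact this

/-- `ι(a) ∪ {γγ(a)} = γδ(a)` whenever `a` has dimension `≥ 2`, by globularity. -/
lemma iota_union_gg (S : PreHG) (hglob : S.Globular) {k a : ℕ}
    (ha : a ∈ S.faces (k+2)) :
    S.iota k a ∪ ({S.gam k (S.gam (k+1) a)} : Finset ℕ) =
      S.gamS k (S.del (k+1) a) := by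
  have h1 := (hglob k a ha).1
  ext x
  simp only [PreHG.iota, Finset.mem_union, Finset.mem_inter]
  constructor
  · rintro (⟨_, hg⟩ | hx)
    · exact hg
    · rw [h1, Finset.mem_sdiff] at hx
      exact hx.1
  · intro hg
    by_cases hd : x ∈ S.delS k (S.del (k+1) a)
    · exact Or.inl ⟨hd, hg⟩
    · exact Or.inr (by rw [h1, Finset.mem_sdiff]; exact ⟨hg, hd⟩)

end PreHG

/-- If `a <⁺ b` in `S_n`, `n > 1`, then `ι(a) ⊆ ι(b)`,
`δδ(a) ⊆ δδ(b)` and `ι(a) ∪ {γγ(a)} ⊆ ι(b) ∪ {γγ(b)}`. -/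
theorem stmt7 (S : PreHG) (hS : S.IsPFS) (k a b : ℕ)
    (ha : a ∈ S.faces (k+2)) (hb : b ∈ S.faces (k+2))
    (hab : S.ltPlus (k+2) a b) :
    S.iota k a ⊆ S.iota k b ∧
    S.delS k (S.del (k+1) a) ⊆ S.delS k (S.del (k+1) b) ∧
    S.iota k a ∪ ({S.gam k (S.gam (k+1) a)} : Finset ℕ) ⊆
      S.iota k b ∪ ({S.gam k (S.gam (k+1) b)} : Finset ℕ) := by
  have main : S.delS k (S.del (k+1) a) ⊆ S.delS k (S.del (k+1) b) ∧
      S.gamS k (S.del (k+1) a) ⊆ S.gamS k (S.del (k+1) b) := by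
    clear ha hb
    induction hab with
    | single h => exact S.stmt7_step hS h
    | tail _ h ih =>
      obtain ⟨h1, h2⟩ := S.stmt7_step hS h
      exact ⟨ih.1.trans h1, ih.2.trans h2⟩
  have hglob : S.Globular := hS.2.2.1
  refine ⟨?_, main.1, ?_⟩
  · exact Finset.inter_subset_inter main.1 main.2
  · rw [S.iota_union_gg hglob ha, S.iota_union_gg hglob hb]
    exact main.2
end

section
/- Let S be a positive face structure, α ∈ S_{n+1} with n > 1. Then ι δ(α) = ι γ(α), i.e. the union of the sets of internal faces of elements of δ(α) equals the set of internal faces of γ(α). -/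
open Relation Finset in
/-- `a <⁻ b` in dim `j+1` implies `γa <⁺ γb` in dim `j`. -/
lemma aux_ltMinus_gam (S : PreHG) (j : ℕ) {a b : ℕ} (h : S.ltMinus (j+1) a b) :
    S.ltPlus j (S.gam j a) (S.gam j b) := by
  induction h with
  | single h => exact TransGen.single ⟨_, h.2.1, h.2.2, rfl⟩
  | tail h hs ih => exact ih.tail ⟨_, hs.2.1, hs.2.2, rfl⟩

open Relation in
/-- `<⁻` is irreflexive in positive dimensions. -/
lemma aux_ltMinus_irrefl (S : PreHG) (hHG : S.IsHG) (hstr : S.StrictPlus) (j a : ℕ) :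
    ¬ S.ltMinus (j+1) a a := by
  intro h
  have hgam := aux_ltMinus_gam S j h
  have haf : a ∈ S.faces (j+1) := by
    cases h with
    | single h => exact h.1
    | tail h hs => exact hs.2.1
  exact hstr j (S.gam j a) (hHG.1 j a haf) hgam

open Relation Finset in
/-- measure decrease for a `⊲⁻`-step (predecessor sets). -/
lemma aux_pred_lt (S : PreHG) (hHG : S.IsHG) (hstr : S.StrictPlus) (j x' x : ℕ)
    [DecidablePred fun y => S.ltMinus (j+1) y x'] [DecidablePred fun y => S.ltMinus (j+1) y x]
    (h : S.ltMinusOne (j+1) x' x) :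
    ((S.faces (j+1)).filter (fun y => S.ltMinus (j+1) y x')).card <
      ((S.faces (j+1)).filter (fun y => S.ltMinus (j+1) y x)).card := by
  apply Finset.card_lt_card
  constructor
  · intro y hy
    simp only [Finset.mem_filter] at hy ⊢
    exact ⟨hy.1, hy.2.tail h⟩
  · intro hsub
    have hx' : x' ∈ (S.faces (j+1)).filter (fun y => S.ltMinus (j+1) y x) := by
      simp only [Finset.mem_filter]
      exact ⟨h.1, TransGen.single h⟩
    have := hsub hx'
    simp only [Finset.mem_filter] at this
    exact aux_ltMinus_irrefl S hHG hstr j x' this.2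

open Relation Finset in
/-- measure decrease for a `⊲⁻`-step (successor sets). -/
lemma aux_succ_lt (S : PreHG) (hHG : S.IsHG) (hstr : S.StrictPlus) (j x x₁ : ℕ)
    [DecidablePred fun y => S.ltMinus (j+1) x₁ y] [DecidablePred fun y => S.ltMinus (j+1) x y]
    (h : S.ltMinusOne (j+1) x x₁) :
    ((S.faces (j+1)).filter (fun y => S.ltMinus (j+1) x₁ y)).card <
      ((S.faces (j+1)).filter (fun y => S.ltMinus (j+1) x y)).card := by
  apply Finset.card_lt_card
  constructor
  · intro y hy
    simp only [Finset.mem_filter] at hy ⊢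
    exact ⟨hy.1, hy.2.head h⟩
  · intro hsub
    have hx₁ : x₁ ∈ (S.faces (j+1)).filter (fun y => S.ltMinus (j+1) x y) := by
      simp only [Finset.mem_filter]
      exact ⟨h.2.1, TransGen.single h⟩
    have := hsub hx₁
    simp only [Finset.mem_filter] at this
    exact aux_ltMinus_irrefl S hHG hstr j x₁ this.2

open Relation Finset in
/-- Descent: internal δ- and γ-faces of members of `δα` appear among those of `γα`. -/
lemma aux_desc (S : PreHG) (hS : S.IsPFS) (k α : ℕ) (hα : α ∈ S.faces (k+3)) :
    ∀ x ∈ S.del (k+2) α,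
      S.delS k (S.del (k+1) x) ⊆ S.delS k (S.del (k+1) (S.gam (k+2) α)) ∧
      S.gamS k (S.del (k+1) x) ⊆ S.gamS k (S.del (k+1) (S.gam (k+2) α)) := by
  classical
  obtain ⟨hHG, -, hGlob, hstr, -⟩ := hS
  -- globularity at α
  have hGα := hGlob (k+1) α hα
  suffices H : ∀ n x, ((S.faces (k+2)).filter (fun y => S.ltMinus (k+2) y x)).card = n →
      x ∈ S.del (k+2) α →
      S.delS k (S.del (k+1) x) ⊆ S.delS k (S.del (k+1) (S.gam (k+2) α)) ∧
      S.gamS k (S.del (k+1) x) ⊆ S.gamS k (S.del (k+1) (S.gam (k+2) α)) by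
    intro x hx; exact H _ x rfl hx
  intro n
  induction n using Nat.strong_induction_on with
  | _ n ih =>
    intro x hn hx
    have hxf : x ∈ S.faces (k+2) := hHG.2.1 (k+2) α hα hx
    constructor
    · intro t ht
      rw [PreHG.delS, Finset.mem_biUnion] at ht
      obtain ⟨u, hu, htu⟩ := ht
      by_cases hcase : ∃ x' ∈ S.del (k+2) α, S.gam (k+1) x' = u
      · obtain ⟨x', hx', hgx'⟩ := hcase
        have hx'f : x' ∈ S.faces (k+2) := hHG.2.1 (k+2) α hα hx'
        have hstep : S.ltMinusOne (k+2) x' x := ⟨hx'f, hxf, by rw [hgx']; exact hu⟩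
        -- globularity at x'
        have hGx' := hGlob k x' hx'f
        have ht' : t ∈ S.delS k (S.del (k+1) x') := by
          have : t ∈ S.del k (S.gam (k+1) x') := by rw [hgx']; exact htu
          rw [hGx'.2] at this
          exact (Finset.mem_sdiff.mp this).1
        exact (ih _ (hn ▸ aux_pred_lt S hHG hstr (k+1) x' x hstep) x' rfl hx').1 ht'
      · -- u is not a codomain, hence belongs to δ(γα)
        have huδγ : u ∈ S.del (k+1) (S.gam (k+2) α) := by
          rw [hGα.2, Finset.mem_sdiff]
          refine ⟨?_, ?_⟩
          · rw [PreHG.delS, Finset.mem_biUnion]; exact ⟨x, hx, hu⟩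
          · rw [PreHG.gamS, Finset.mem_image]
            rintro ⟨x', hx', hgx'⟩; exact hcase ⟨x', hx', hgx'⟩
        rw [PreHG.delS, Finset.mem_biUnion]
        exact ⟨u, huδγ, htu⟩
    · intro t ht
      rw [PreHG.gamS, Finset.mem_image] at ht
      obtain ⟨v, hv, htv⟩ := ht
      by_cases hcase : ∃ x' ∈ S.del (k+2) α, S.gam (k+1) x' = v
      · obtain ⟨x', hx', hgx'⟩ := hcase
        have hx'f : x' ∈ S.faces (k+2) := hHG.2.1 (k+2) α hα hx'
        have hstep : S.ltMinusOne (k+2) x' x := ⟨hx'f, hxf, by rw [hgx']; exact hv⟩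
        have hGx' := hGlob k x' hx'f
        have ht' : t ∈ S.gamS k (S.del (k+1) x') := by
          have : t ∈ ({S.gam k (S.gam (k+1) x')} : Finset ℕ) := by
            rw [Finset.mem_singleton, ← htv, hgx']
          rw [hGx'.1] at this
          exact (Finset.mem_sdiff.mp this).1
        exact (ih _ (hn ▸ aux_pred_lt S hHG hstr (k+1) x' x hstep) x' rfl hx').2 ht'
      · have hvδγ : v ∈ S.del (k+1) (S.gam (k+2) α) := by
          rw [hGα.2, Finset.mem_sdiff]
          refine ⟨?_, ?_⟩
          · rw [PreHG.delS, Finset.mem_biUnion]; exact ⟨x, hx, hv⟩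
          · rw [PreHG.gamS, Finset.mem_image]
            rintro ⟨x', hx', hgx'⟩; exact hcase ⟨x', hx', hgx'⟩
        rw [PreHG.gamS, Finset.mem_image]
        exact ⟨v, hvδγ, htv⟩

open Relation Finset in
/-- Ascent: an internal face of `γα` is an internal face of some member of `δα`. -/
lemma aux_asc (S : PreHG) (hS : S.IsPFS) (k α : ℕ) (hα : α ∈ S.faces (k+3)) :
    ∀ x ∈ S.del (k+2) α, ∀ t u, u ∈ S.del (k+1) x → t ∈ S.del k u →
      t ∈ S.gamS k (S.del (k+1) (S.gam (k+2) α)) →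
      t ∈ (S.del (k+2) α).biUnion (S.iota k) := by
  classical
  obtain ⟨hHG, -, hGlob, hstr, -⟩ := hS
  have hGα := hGlob (k+1) α hα
  have hγαf : S.gam (k+2) α ∈ S.faces (k+2) := hHG.1 (k+2) α hα
  have hGγα := hGlob k (S.gam (k+2) α) hγαf
  suffices H : ∀ n x, ((S.faces (k+2)).filter (fun y => S.ltMinus (k+2) x y)).card = n →
      x ∈ S.del (k+2) α → ∀ t u, u ∈ S.del (k+1) x → t ∈ S.del k u →
      t ∈ S.gamS k (S.del (k+1) (S.gam (k+2) α)) →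
      t ∈ (S.del (k+2) α).biUnion (S.iota k) by
    intro x hx; exact H _ x rfl hx
  intro n
  induction n using Nat.strong_induction_on with
  | _ n ih =>
    intro x hn hx t u hu htu htγ
    have hxf : x ∈ S.faces (k+2) := hHG.2.1 (k+2) α hα hx
    have hGx := hGlob k x hxf
    have htδ : t ∈ S.delS k (S.del (k+1) x) := by
      rw [PreHG.delS, Finset.mem_biUnion]; exact ⟨u, hu, htu⟩
    by_cases hcase : t ∈ S.gamS k (S.del (k+1) x)
    · rw [Finset.mem_biUnion]
      exact ⟨x, hx, Finset.mem_inter.mpr ⟨htδ, hcase⟩⟩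
    · -- t ∈ δ(γx)
      have htγx : t ∈ S.del k (S.gam (k+1) x) := by
        rw [hGx.2, Finset.mem_sdiff]; exact ⟨htδ, hcase⟩
      by_cases hcase2 : ∃ x₁ ∈ S.del (k+2) α, S.gam (k+1) x ∈ S.del (k+1) x₁
      · obtain ⟨x₁, hx₁, hmem⟩ := hcase2
        have hx₁f : x₁ ∈ S.faces (k+2) := hHG.2.1 (k+2) α hα hx₁
        have hstep : S.ltMinusOne (k+2) x x₁ := ⟨hxf, hx₁f, hmem⟩
        exact ih _ (hn ▸ aux_succ_lt S hHG hstr (k+1) x x₁ hstep) x₁ rfl hx₁ t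
          (S.gam (k+1) x) hmem htγx htγ
      · -- γx = γγα, contradiction with t ∈ γS δ(γα)
        have hγx : S.gam (k+1) x ∈ ({S.gam (k+1) (S.gam (k+2) α)} : Finset ℕ) := by
          rw [hGα.1, Finset.mem_sdiff]
          refine ⟨?_, ?_⟩
          · rw [PreHG.gamS, Finset.mem_image]; exact ⟨x, hx, rfl⟩
          · rw [PreHG.delS, Finset.mem_biUnion]
            rintro ⟨x₁, hx₁, hmem⟩; exact hcase2 ⟨x₁, hx₁, hmem⟩
        rw [Finset.mem_singleton] at hγx
        have : t ∈ S.del k (S.gam (k+1) (S.gam (k+2) α)) := hγx ▸ htγx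
        rw [hGγα.2, Finset.mem_sdiff] at this
        exact absurd htγ this.2

/-- For `α ∈ S_{n+1}` with `n > 1`: `ιδ(α) = ιγ(α)`. -/
theorem stmt8 (S : PreHG) (hS : S.IsPFS) (k α : ℕ) (hα : α ∈ S.faces (k+3)) :
    (S.del (k+2) α).biUnion (S.iota k) = S.iota k (S.gam (k+2) α) := by
  classical
  have hGα := hS.2.2.1 (k+1) α hα
  apply Finset.Subset.antisymm
  · intro t ht
    rw [Finset.mem_biUnion] at ht
    obtain ⟨x, hx, htx⟩ := ht
    rw [PreHG.iota, Finset.mem_inter] at htx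
    obtain ⟨hd, hg⟩ := htx
    have h := aux_desc S hS k α hα x hx
    rw [PreHG.iota, Finset.mem_inter]
    exact ⟨h.1 hd, h.2 hg⟩
  · intro t ht
    rw [PreHG.iota, Finset.mem_inter] at ht
    obtain ⟨hd, hg⟩ := ht
    rw [PreHG.delS, Finset.mem_biUnion] at hd
    obtain ⟨u, hu, htu⟩ := hd
    have huδδ : u ∈ S.delS (k+1) (S.del (k+2) α) := by
      rw [hGα.2, Finset.mem_sdiff] at hu
      exact hu.1
    rw [PreHG.delS, Finset.mem_biUnion] at huδδ
    obtain ⟨x, hx, hux⟩ := huδδ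
    exact aux_asc S hS k α hα x hx t u hux htu hg
end

section
/- Let S be a positive face structure, a ∈ S_n, and α ∈ S_{n+1} such that γ(a) ∈ ι(α) or δ(a) ∩ ι(α) ≠ ∅. Then a <⁺ γ(α). -/
open Relation

section Aux

variable {S : PreHG}

private lemma ltPlus_mem_right (hS : S.IsPFS) {k a b : ℕ} (h : S.ltPlus k a b) :
    b ∈ S.faces k := by
  induction h with
  | single h => obtain ⟨β, hβ, _, hg⟩ := h; exact hg ▸ hS.1.1 k β hβ
  | tail _ h _ => obtain ⟨β, hβ, _, hg⟩ := h; exact hg ▸ hS.1.1 k β hβ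

/-- The number of faces strictly above `x` in dimension `k`. -/
private noncomputable def msr (S : PreHG) (k x : ℕ) : ℕ :=
  (@Finset.filter ℕ (fun y => S.ltPlus k x y) (Classical.decPred _) (S.faces k)).card

private lemma msr_lt (hS : S.IsPFS) {k x y : ℕ} (hx : x ∈ S.faces k)
    (h : S.ltPlus k x y) : msr S k y < msr S k x := by
  classical
  have hy : y ∈ S.faces k := ltPlus_mem_right hS h
  unfold msr
  apply Finset.card_lt_card
  rw [Finset.ssubset_iff_of_subset]
  · refine ⟨y, ?_, ?_⟩
    · simp only [Finset.mem_filter]; exact ⟨hy, h⟩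
    · simp only [Finset.mem_filter, not_and]
      intro _
      exact hS.2.2.2.1 k y hy
  · intro z hz
    simp only [Finset.mem_filter] at *
    exact ⟨hz.1, h.trans hz.2⟩

/-- Key lemma: internal faces of `A` are below `γγ(A)`. -/
private lemma lemM (hS : S.IsPFS) :
    ∀ n k x A, A ∈ S.faces (k+2) → x ∈ S.iota k A → msr S k x ≤ n →
      S.ltPlus k x (S.gam k (S.gam (k+1) A)) := by
  intro n
  induction n using Nat.strong_induction_on with
  | _ n IH =>
  intro k x A hA hx hn
  rw [PreHG.iota, Finset.mem_inter] at hx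
  obtain ⟨β, hβmem, hxβ⟩ := Finset.mem_biUnion.mp hx.1
  have hβf : β ∈ S.faces (k+1) := hS.1.2.1 (k+1) A hA hβmem
  have hstep : S.ltPlusOne k x (S.gam k β) := ⟨β, hβf, hxβ, rfl⟩
  have hymem : S.gam k β ∈ S.gamS k (S.del (k+1) A) :=
    Finset.mem_image.mpr ⟨β, hβmem, rfl⟩
  by_cases hy : S.gam k β ∈ S.delS k (S.del (k+1) A)
  · have hyι : S.gam k β ∈ S.iota k A := Finset.mem_inter.mpr ⟨hy, hymem⟩
    have hxf : x ∈ S.faces k := hS.1.2.1 k β hβf hxβ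
    have hlt : S.ltPlus k x (S.gam k β) := Relation.TransGen.single hstep
    have hm : msr S k (S.gam k β) < n := lt_of_lt_of_le (msr_lt hS hxf hlt) hn
    exact hlt.trans (IH _ hm k _ A hA hyι le_rfl)
  · have hglob := (hS.2.2.1 k A hA).1
    have hmem : S.gam k β ∈ ({S.gam k (S.gam (k+1) A)} : Finset ℕ) := by
      rw [hglob]; exact Finset.mem_sdiff.mpr ⟨hymem, hy⟩
    exact Relation.TransGen.single ((Finset.mem_singleton.mp hmem) ▸ hstep)

/-- Monotonicity of `γ` along `<⁺`. -/
private lemma lemG (hS : S.IsPFS) {k P Q : ℕ} (h : S.ltPlus (k+1) P Q) :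
    S.gam k P = S.gam k Q ∨ S.ltPlus k (S.gam k P) (S.gam k Q) := by
  have step : ∀ P' Q', S.ltPlusOne (k+1) P' Q' →
      S.gam k P' = S.gam k Q' ∨ S.ltPlus k (S.gam k P') (S.gam k Q') := by
    rintro P' Q' ⟨R, hR, hPd, hgR⟩
    have hmem : S.gam k P' ∈ S.gamS k (S.del (k+1) R) :=
      Finset.mem_image.mpr ⟨P', hPd, rfl⟩
    by_cases hy : S.gam k P' ∈ S.delS k (S.del (k+1) R)
    · have hι : S.gam k P' ∈ S.iota k R := Finset.mem_inter.mpr ⟨hy, hmem⟩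
      have := lemM hS (msr S k (S.gam k P')) k (S.gam k P') R hR hι le_rfl
      rw [hgR] at this
      exact Or.inr this
    · have hglob := (hS.2.2.1 k R hR).1
      have hx : S.gam k P' ∈ ({S.gam k (S.gam (k+1) R)} : Finset ℕ) := by
        rw [hglob]; exact Finset.mem_sdiff.mpr ⟨hmem, hy⟩
      rw [hgR] at hx
      exact Or.inl (Finset.mem_singleton.mp hx)
  induction h with
  | single h => exact step _ _ h
  | tail h₁ h₂ ih =>
    rcases ih with he | hl
    · rcases step _ _ h₂ with he2 | hl2
      · exact Or.inl (he.trans he2)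
      · exact Or.inr (by rw [he]; exact hl2)
    · rcases step _ _ h₂ with he2 | hl2
      · exact Or.inr (by rw [← he2]; exact hl)
      · exact Or.inr (hl.trans hl2)

/-- Upper linearity: faces above a common face are comparable. -/
private lemma lemUL (hS : S.IsPFS) (m : ℕ) :
    ∀ n b a c, msr S m b ≤ n → S.ltPlus m b a → S.ltPlus m b c →
      a = c ∨ S.perpPlus m a c := by
  intro n
  induction n using Nat.strong_induction_on with
  | _ n IH =>
  intro b a c hn hba hbc
  obtain ⟨a₁, hsa, hra⟩ : ∃ a₁, S.ltPlusOne m b a₁ ∧ (a₁ = a ∨ S.ltPlus m a₁ a) := by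
    obtain ⟨a₁, h1, h2⟩ := Relation.TransGen.head'_iff.mp hba
    rcases Relation.reflTransGen_iff_eq_or_transGen.mp h2 with rfl | h2
    · exact ⟨a, h1, Or.inl rfl⟩
    · exact ⟨a₁, h1, Or.inr h2⟩
  obtain ⟨c₁, hsc, hrc⟩ : ∃ c₁, S.ltPlusOne m b c₁ ∧ (c₁ = c ∨ S.ltPlus m c₁ c) := by
    obtain ⟨c₁, h1, h2⟩ := Relation.TransGen.head'_iff.mp hbc
    rcases Relation.reflTransGen_iff_eq_or_transGen.mp h2 with rfl | h2
    · exact ⟨c, h1, Or.inl rfl⟩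
    · exact ⟨c₁, h1, Or.inr h2⟩
  obtain ⟨A, hAf, hbA, hgA⟩ := hsa
  obtain ⟨C, hCf, hbC, hgC⟩ := hsc
  have hbf : b ∈ S.faces m := hS.1.2.1 m A hAf hbA
  have core : ∀ a₁' c₁' a' c', S.ltPlus m b a₁' →
      (a₁' = a' ∨ S.ltPlus m a₁' a') → (c₁' = c' ∨ S.ltPlus m c₁' c') →
      (a₁' = c₁' ∨ S.ltPlus m a₁' c₁') → a' = c' ∨ S.perpPlus m a' c' := by
    intro a₁' c₁' a' c' hba₁ hra' hrc' hcomp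
    have hIHa : S.ltPlus m a₁' a' → S.ltPlus m a₁' c' →
        a' = c' ∨ S.perpPlus m a' c' := fun h1 h2 =>
      IH (msr S m a₁') (lt_of_lt_of_le (msr_lt hS hbf hba₁) hn) a₁' a' c' le_rfl h1 h2
    rcases hcomp with heq | hlt
    · subst heq
      rcases hra' with rfl | h1
      · rcases hrc' with rfl | h2
        · exact Or.inl rfl
        · exact Or.inr (Or.inl h2)
      · rcases hrc' with rfl | h2
        · exact Or.inr (Or.inr h1)
        · exact hIHa h1 h2
    · have h2 : S.ltPlus m a₁' c' := by
        rcases hrc' with rfl | h2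
        · exact hlt
        · exact hlt.trans h2
      rcases hra' with rfl | h1
      · exact Or.inr (Or.inl h2)
      · exact hIHa h1 h2
  rcases (hS.2.2.2.2.2.2 m b).2 A C hAf hCf hbA hbC with hAC | hAC | hAC
  · have heq : a₁ = c₁ := by rw [← hgA, ← hgC, hAC]
    exact core a₁ c₁ a c (Relation.TransGen.single ⟨A, hAf, hbA, hgA⟩) hra hrc (Or.inl heq)
  · have hcomp : a₁ = c₁ ∨ S.ltPlus m a₁ c₁ := by
      have := lemG hS hAC
      rw [hgA, hgC] at this
      exact this
    exact core a₁ c₁ a c (Relation.TransGen.single ⟨A, hAf, hbA, hgA⟩) hra hrc hcomp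
  · have hcomp : c₁ = a₁ ∨ S.ltPlus m c₁ a₁ := by
      have := lemG hS hAC
      rw [hgA, hgC] at this
      exact this
    rcases core c₁ a₁ c a (Relation.TransGen.single ⟨C, hCf, hbC, hgC⟩) hrc hra hcomp with h | h
    · exact Or.inl h.symm
    · exact Or.inr h.symm

end Aux

/-- If `a ∈ S_n`, `α ∈ S_{n+1}` and `γ(a) ∈ ι(α)` or
`δ(a) ∩ ι(α) ≠ ∅`, then `a <⁺ γ(α)`. -/


theorem stmt9 (S : PreHG) (hS : S.IsPFS) (k a α : ℕ)
    (ha : a ∈ S.faces (k+1)) (hα : α ∈ S.faces (k+2))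
    (h : S.gam k a ∈ S.iota k α ∨ (S.del k a ∩ S.iota k α).Nonempty) :
    S.ltPlus (k+1) a (S.gam (k+1) α) := by
  classical
  have hγα : S.gam (k+1) α ∈ S.faces (k+1) := hS.1.1 (k+1) α hα
  have hDisj := hS.2.2.2.2.2.1
  have hPencil := hS.2.2.2.2.2.2
  have hGlob := hS.2.2.1 k α hα
  rcases h with hx | ⟨x, hxmem⟩
  · -- Case 1: γ(a) ∈ ι(α)
    rw [PreHG.iota, Finset.mem_inter] at hx
    obtain ⟨β₁, hβ₁mem, hxβ₁⟩ := Finset.mem_biUnion.mp hx.1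
    obtain ⟨β₀, hβ₀mem, hγβ₀⟩ := Finset.mem_image.mp hx.2
    have hβ₀f : β₀ ∈ S.faces (k+1) := hS.1.2.1 (k+1) α hα hβ₀mem
    have hβ₁f : β₁ ∈ S.faces (k+1) := hS.1.2.1 (k+1) α hα hβ₁mem
    have hβ₀γα : S.ltPlusOne (k+1) β₀ (S.gam (k+1) α) := ⟨α, hα, hβ₀mem, rfl⟩
    have hβ₁γα : S.ltPlusOne (k+1) β₁ (S.gam (k+1) α) := ⟨α, hα, hβ₁mem, rfl⟩
    rcases (hPencil k (S.gam k a)).1 a β₀ ha hβ₀f rfl hγβ₀ with rfl | hlt | hlt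
    · exact Relation.TransGen.single hβ₀γα
    · exact hlt.trans (Relation.TransGen.single hβ₀γα)
    · -- β₀ <⁺ a
      rcases lemUL hS (k+1) (msr S (k+1) β₀) β₀ a (S.gam (k+1) α) le_rfl hlt
          (Relation.TransGen.single hβ₀γα) with heq | hlt' | hlt'
      · -- a = γ(α): impossible since γ(a) ∈ δδ(α) but γγ(α) ∉ δδ(α)
        exfalso
        have hxdel : S.gam k a ∈ S.delS k (S.del (k+1) α) :=
          Finset.mem_biUnion.mpr ⟨β₁, hβ₁mem, hxβ₁⟩
        have hsing : S.gam k (S.gam (k+1) α)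
            ∈ S.gamS k (S.del (k+1) α) \ S.delS k (S.del (k+1) α) := by
          rw [← hGlob.1]; exact Finset.mem_singleton_self _
        rw [heq] at hxdel
        exact (Finset.mem_sdiff.mp hsing).2 hxdel
      · exact hlt'
      · -- γ(α) <⁺ a : contradicts disjointness for (a, β₁)
        exfalso
        have hper : S.perpPlus (k+1) a β₁ :=
          Or.inr ((Relation.TransGen.single hβ₁γα).trans hlt')
        have hmin : S.ltMinusOne (k+1) a β₁ := ⟨ha, hβ₁f, hxβ₁⟩
        exact hDisj k a β₁ ha hβ₁f ⟨hper, Or.inl (Relation.TransGen.single hmin)⟩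
  · -- Case 2: x ∈ δ(a) ∩ ι(α)
    rw [Finset.mem_inter] at hxmem
    obtain ⟨hxa, hx⟩ := hxmem
    rw [PreHG.iota, Finset.mem_inter] at hx
    obtain ⟨β₁, hβ₁mem, hxβ₁⟩ := Finset.mem_biUnion.mp hx.1
    obtain ⟨β₀, hβ₀mem, hγβ₀⟩ := Finset.mem_image.mp hx.2
    have hβ₀f : β₀ ∈ S.faces (k+1) := hS.1.2.1 (k+1) α hα hβ₀mem
    have hβ₁f : β₁ ∈ S.faces (k+1) := hS.1.2.1 (k+1) α hα hβ₁mem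
    have hβ₀γα : S.ltPlusOne (k+1) β₀ (S.gam (k+1) α) := ⟨α, hα, hβ₀mem, rfl⟩
    have hβ₁γα : S.ltPlusOne (k+1) β₁ (S.gam (k+1) α) := ⟨α, hα, hβ₁mem, rfl⟩
    rcases (hPencil k x).2 a β₁ ha hβ₁f hxa hxβ₁ with rfl | hlt | hlt
    · exact Relation.TransGen.single hβ₁γα
    · exact hlt.trans (Relation.TransGen.single hβ₁γα)
    · -- β₁ <⁺ a
      rcases lemUL hS (k+1) (msr S (k+1) β₁) β₁ a (S.gam (k+1) α) le_rfl hlt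
          (Relation.TransGen.single hβ₁γα) with heq | hlt' | hlt'
      · -- a = γ(α): impossible since x ∈ δ(γ(α)) would contradict x ∈ γδ(α)
        exfalso
        rw [heq] at hxa
        rw [hGlob.2] at hxa
        exact (Finset.mem_sdiff.mp hxa).2 hx.2
      · exact hlt'
      · -- γ(α) <⁺ a : contradicts disjointness for (a, β₀)
        exfalso
        have hper : S.perpPlus (k+1) a β₀ :=
          Or.inr ((Relation.TransGen.single hβ₀γα).trans hlt')
        have hmin : S.ltMinusOne (k+1) β₀ a := ⟨hβ₀f, ha, by rw [hγβ₀]; exact hxa⟩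
        exact hDisj k a β₀ ha hβ₀f ⟨hper, Or.inr (Relation.TransGen.single hmin)⟩
end

section
/- Let S be a positive face structure. If a ∈ S and a does not belong to δ(S) (the union of δ(x) over all faces x of S), then γ(a) ∉ ι(S) and δ(a) ∩ ι(S) = ∅, where ι(S) is the union of ι(x) = δδ(x) ∩ γδ(x) over all faces x of dimension ≥ 2. -/
/-!
A face `a` lying in no domain is `<⁺`-maximal. A face `y ∈ δ(x)` below `a` then forces
`γ(x) ≤⁺ a`, because the faces above a given face are linearly ordered; that in turn rests on
globularity, which transports `ζ <⁺ ξ` down to `γ(ζ) ≤⁺ γ(ξ)`, and on pencil linearity.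
If `γ(a) ∈ ι(x)`, pencil linearity of the `γ`-fibre of `γ(a)` gives a face of `δ(x)` below `a`,
so `γ(x) ≤⁺ a`: equality contradicts globularity (`γγ(x) ∉ δδ(x)`), while `γ(x) <⁺ a` makes the
face `α ∈ δ(x)` with `γ(a) ∈ δ(α)` both `<⁺`- and `<⁻`-comparable with `a`. If `t ∈ δ(a) ∩ ι(x)`,
the `δ`-fibre of `t` gives `α ∈ δ(x)` below `a`, and then the face `β ∈ δ(x)` with `γ(β) = t`
satisfies `β <⁺ a` and `β ⊲⁻ a`. Both cases contradict disjointness.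
-/

namespace PreHG

open Relation

variable {S : PreHG}

lemma mem_iota {k x t : ℕ} :
    t ∈ S.iota k x ↔
      (∃ α ∈ S.del (k+1) x, t ∈ S.del k α) ∧ ∃ β ∈ S.del (k+1) x, S.gam k β = t := by
  simp [iota, delS, gamS]

lemma mem_faces_of_ltPlus (hHG : S.IsHG) {m u z : ℕ} (h : S.ltPlus m u z) : z ∈ S.faces m := by
  induction h with
  | single h | tail _ h =>
    obtain ⟨α, hα, -, rfl⟩ := h
    exact hHG.1 m α hα

lemma wellFounded_flip_ltPlus (hHG : S.IsHG) (hst : S.StrictPlus) (m : ℕ) :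
    WellFounded (flip (S.ltPlus m)) := by
  classical
  refine Subrelation.wf ?_ (measure fun y => ((S.faces m).filter (S.ltPlus m y)).card).wf
  intro z y hyz
  have hz := mem_faces_of_ltPlus hHG hyz
  refine Finset.card_lt_card ((Finset.ssubset_iff_of_subset ?_).mpr ⟨z, ?_, ?_⟩)
  · intro w hw
    rw [Finset.mem_filter] at hw ⊢
    exact ⟨hw.1, hyz.trans hw.2⟩
  · exact Finset.mem_filter.mpr ⟨hz, hyz⟩
  · exact fun hzz => hst m z hz (Finset.mem_filter.mp hzz).2

lemma not_ltPlus_of_forall_not_mem_del {k a : ℕ} (hnd : ∀ b ∈ S.faces (k+1), a ∉ S.del k b)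
    (q : ℕ) : ¬ S.ltPlus k a q := fun h => by
  obtain ⟨-, ⟨α, hα, haα, -⟩, -⟩ := TransGen.head'_iff.mp h
  exact hnd α hα haα

lemma not_perpPlus_of_gam_mem_del (hD : S.Disjointness) {k a b : ℕ}
    (ha : a ∈ S.faces (k+1)) (hb : b ∈ S.faces (k+1)) (h : S.gam k a ∈ S.del k b) :
    ¬ S.perpPlus (k+1) a b :=
  fun hp => hD k a b ha hb ⟨hp, Or.inl (.single ⟨ha, hb, h⟩)⟩

lemma gam_gam_not_mem_delS (hG : S.Globular) {m Ξ : ℕ} (hΞ : Ξ ∈ S.faces (m+2)) :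
    S.gam m (S.gam (m+1) Ξ) ∉ S.delS m (S.del (m+1) Ξ) := by
  have h := (hG m Ξ hΞ).1 ▸ Finset.mem_singleton_self (S.gam m (S.gam (m+1) Ξ))
  exact (Finset.mem_sdiff.mp h).2

lemma gam_eq_gam_gam_or_mem_delS (hG : S.Globular) {m Ξ ζ : ℕ} (hΞ : Ξ ∈ S.faces (m+2))
    (hζ : ζ ∈ S.del (m+1) Ξ) :
    S.gam m ζ = S.gam m (S.gam (m+1) Ξ) ∨ S.gam m ζ ∈ S.delS m (S.del (m+1) Ξ) := by
  by_cases hδ : S.gam m ζ ∈ S.delS m (S.del (m+1) Ξ)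
  · exact Or.inr hδ
  · have h : S.gam m ζ ∈ S.gamS m (S.del (m+1) Ξ) \ S.delS m (S.del (m+1) Ξ) :=
      Finset.mem_sdiff.mpr ⟨Finset.mem_image_of_mem _ hζ, hδ⟩
    rw [← (hG m Ξ hΞ).1] at h
    exact Or.inl (Finset.mem_singleton.mp h)

lemma reflTransGen_gam_gam_of_mem_del (hHG : S.IsHG) (hG : S.Globular)
    (hst : S.StrictPlus) {m Ξ ζ : ℕ} (hΞ : Ξ ∈ S.faces (m+2)) (hζ : ζ ∈ S.del (m+1) Ξ) :
    ReflTransGen (S.ltPlusOne m) (S.gam m ζ) (S.gam m (S.gam (m+1) Ξ)) := by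
  suffices ∀ u, ∀ ζ ∈ S.del (m+1) Ξ, S.gam m ζ = u →
      ReflTransGen (S.ltPlusOne m) u (S.gam m (S.gam (m+1) Ξ)) from this _ ζ hζ rfl
  intro u
  induction u using (wellFounded_flip_ltPlus hHG hst m).induction with
  | _ u ih =>
  rintro ζ hζ rfl
  rcases gam_eq_gam_gam_or_mem_delS hG hΞ hζ with h | h
  · exact h ▸ .refl
  · obtain ⟨c, hc, hζc⟩ := Finset.mem_biUnion.mp h
    have hstep : S.ltPlusOne m (S.gam m ζ) (S.gam m c) :=
      ⟨c, hHG.2.1 (m+1) Ξ hΞ hc, hζc, rfl⟩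
    exact .head hstep (ih _ (.single hstep) c hc rfl)

lemma reflTransGen_gam_of_ltPlus (hHG : S.IsHG) (hG : S.Globular) (hst : S.StrictPlus)
    {m ζ ξ : ℕ} (h : S.ltPlus (m+1) ζ ξ) :
    ReflTransGen (S.ltPlusOne m) (S.gam m ζ) (S.gam m ξ) := by
  induction h with
  | single h =>
    obtain ⟨Ξ, hΞ, hζ, rfl⟩ := h
    exact reflTransGen_gam_gam_of_mem_del hHG hG hst hΞ hζ
  | tail _ h ih =>
    obtain ⟨Ξ, hΞ, hζ, rfl⟩ := h
    exact ih.trans (reflTransGen_gam_gam_of_mem_del hHG hG hst hΞ hζ)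

lemma total_of_ltPlusOne_of_ltPlusOne (hHG : S.IsHG) (hG : S.Globular) (hst : S.StrictPlus)
    (hP : S.Pencil) {m c z w : ℕ} (hz : S.ltPlusOne m c z) (hw : S.ltPlusOne m c w) :
    ReflTransGen (S.ltPlusOne m) z w ∨ ReflTransGen (S.ltPlusOne m) w z := by
  obtain ⟨ζ, hζ, hcζ, rfl⟩ := hz
  obtain ⟨ξ, hξ, hcξ, rfl⟩ := hw
  rcases (hP m c).2 ζ ξ hζ hξ hcζ hcξ with rfl | hζξ | hξζ
  · exact Or.inl .refl
  · exact Or.inl (reflTransGen_gam_of_ltPlus hHG hG hst hζξ)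
  · exact Or.inr (reflTransGen_gam_of_ltPlus hHG hG hst hξζ)

lemma total_of_reflTransGen_of_reflTransGen (hHG : S.IsHG) (hG : S.Globular)
    (hst : S.StrictPlus) (hP : S.Pencil) {m c z w : ℕ}
    (hz : ReflTransGen (S.ltPlusOne m) c z) (hw : ReflTransGen (S.ltPlusOne m) c w) :
    ReflTransGen (S.ltPlusOne m) z w ∨ ReflTransGen (S.ltPlusOne m) w z := by
  induction c using (wellFounded_flip_ltPlus hHG hst m).induction generalizing z w with
  | _ c ih =>
  rcases ReflTransGen.cases_head_iff.mp hz with rfl | ⟨z₁, hcz₁, hz₁z⟩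
  · exact Or.inl hw
  rcases ReflTransGen.cases_head_iff.mp hw with rfl | ⟨w₁, hcw₁, hw₁w⟩
  · exact Or.inr hz
  rcases total_of_ltPlusOne_of_ltPlusOne hHG hG hst hP hcz₁ hcw₁ with h | h
  · exact ih z₁ (.single hcz₁) hz₁z (h.trans hw₁w)
  · exact ih w₁ (.single hcw₁) (h.trans hz₁z) hw₁w

lemma reflTransGen_gam_of_mem_del_of_ltPlus (hHG : S.IsHG) (hG : S.Globular)
    (hst : S.StrictPlus) (hP : S.Pencil) {m a x y : ℕ} (hmax : ∀ q, ¬ S.ltPlus m a q)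
    (hx : x ∈ S.faces (m+1)) (hy : y ∈ S.del m x) (hya : S.ltPlus m y a) :
    ReflTransGen (S.ltPlusOne m) (S.gam m x) a := by
  have hyx : ReflTransGen (S.ltPlusOne m) y (S.gam m x) := .single ⟨x, hx, hy, rfl⟩
  rcases total_of_reflTransGen_of_reflTransGen hHG hG hst hP hyx hya.to_reflTransGen
    with h | h
  · exact h
  · rcases reflTransGen_iff_eq_or_transGen.mp h with h | h
    · exact h ▸ .refl
    · exact absurd h (hmax _)

end PreHG

/-- If `a ∈ S_{k+1}` is not in the domain of any face, then
`γ(a) ∉ ι(S)` and `δ(a) ∩ ι(S) = ∅`. -/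
theorem stmt10 (S : PreHG) (hS : S.IsPFS) (k a : ℕ)
    (ha : a ∈ S.faces (k+1))
    (hnd : ∀ b ∈ S.faces (k+2), a ∉ S.del (k+1) b) :
    ∀ x ∈ S.faces (k+2),
      S.gam k a ∉ S.iota k x ∧ ∀ t ∈ S.del k a, t ∉ S.iota k x := by
  obtain ⟨hHG, -, hG, hst, -, hD, hP⟩ := hS
  have hmax := PreHG.not_ltPlus_of_forall_not_mem_del hnd
  intro x hx
  have hδx : S.del (k+1) x ⊆ S.faces (k+1) := hHG.2.1 (k+1) x hx
  have hne : ∀ y ∈ S.del (k+1) x, y ≠ a := fun y hy h => hnd x hx (h ▸ hy)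
  have hxa {y} (hy : y ∈ S.del (k+1) x) (hya : S.ltPlus (k+1) y a) :=
    PreHG.reflTransGen_gam_of_mem_del_of_ltPlus hHG hG hst hP hmax hx hy hya
  refine ⟨fun hι => ?_, fun t ht hι => ?_⟩
  · obtain ⟨⟨α, hαx, hα⟩, β, hβx, hβ⟩ := PreHG.mem_iota.mp hι
    have hβa : S.ltPlus (k+1) β a :=
      (((hP k _).1 β a (hδx hβx) ha hβ rfl).resolve_left (hne β hβx)).resolve_right (hmax β)
    rcases Relation.reflTransGen_iff_eq_or_transGen.mp (hxa hβx hβa) with rfl | h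
    · exact PreHG.gam_gam_not_mem_delS hG hx (Finset.mem_biUnion.mpr ⟨α, hαx, hα⟩)
    · exact PreHG.not_perpPlus_of_gam_mem_del hD ha (hδx hαx) hα
        (Or.inr (.head ⟨x, hx, hαx, rfl⟩ h))
  · obtain ⟨⟨α, hαx, hα⟩, β, hβx, rfl⟩ := PreHG.mem_iota.mp hι
    have hαa : S.ltPlus (k+1) α a :=
      (((hP k _).2 α a (hδx hαx) ha hα ht).resolve_left (hne α hαx)).resolve_right (hmax α)
    exact PreHG.not_perpPlus_of_gam_mem_del hD (hδx hβx) ha ht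
      (Or.inl (.head' ⟨x, hx, hβx, rfl⟩ (hxa hαx hαa)))
end

section
/- Every morphism of positive face structures is injective in each dimension, and every automorphism of a positive face structure is the identity. -/
/-- A morphism of positive hypergraphs: dimension-indexed functions commuting with
`γ` and restricting to bijections `δ(a) → δ(f(a))`. -/
structure HGHom (S T : PreHG) where
  f : ℕ → ℕ → ℕ
  mem : ∀ k a, a ∈ S.faces k → f k a ∈ T.faces k
  gam_comm : ∀ k a, a ∈ S.faces (k+1) → T.gam k (f (k+1) a) = f k (S.gam k a)
  del_mem : ∀ k a, a ∈ S.faces (k+1) → ∀ x ∈ S.del k a, f k x ∈ T.del k (f (k+1) a)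
  del_inj : ∀ k a, a ∈ S.faces (k+1) →
    ∀ x ∈ S.del k a, ∀ y ∈ S.del k a, f k x = f k y → x = y
  del_surj : ∀ k a, a ∈ S.faces (k+1) →
    ∀ y ∈ T.del k (f (k+1) a), ∃ x ∈ S.del k a, f k x = y

namespace Stmt14Aux

open PreHG

lemma hom_ltPlusOne {S T : PreHG} (φ : HGHom S T) (k : ℕ) {a b : ℕ}
    (h : S.ltPlusOne k a b) : T.ltPlusOne k (φ.f k a) (φ.f k b) := by
  obtain ⟨α, hα, ha, hg⟩ := h
  exact ⟨φ.f (k+1) α, φ.mem _ _ hα, φ.del_mem _ _ hα _ ha,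
    by rw [φ.gam_comm _ _ hα, hg]⟩

lemma hom_ltPlus {S T : PreHG} (φ : HGHom S T) (k : ℕ) {a b : ℕ}
    (h : S.ltPlus k a b) : T.ltPlus k (φ.f k a) (φ.f k b) := by
  induction h with
  | single h => exact Relation.TransGen.single (hom_ltPlusOne φ k h)
  | tail _ h ih => exact ih.tail (hom_ltPlusOne φ k h)

lemma hom_inj {S T : PreHG} (hS : S.IsPFS) (hT : T.IsPFS) (φ : HGHom S T) :
    ∀ k a b, a ∈ S.faces k → b ∈ S.faces k → φ.f k a = φ.f k b → a = b := by
  intro k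
  induction k with
  | zero =>
    intro a b ha hb hfe
    rcases hS.2.2.2.2.1 a ha b hb with h | h | h
    · exact h
    · have := hom_ltPlus φ 0 h
      rw [hfe] at this
      exact absurd this (hT.2.2.2.1 0 _ (φ.mem 0 b hb))
    · have := hom_ltPlus φ 0 h
      rw [hfe] at this
      exact absurd this (hT.2.2.2.1 0 _ (φ.mem 0 b hb))
  | succ k ih =>
    intro a b ha hb hfe
    have hga : S.gam k a ∈ S.faces k := hS.1.1 k a ha
    have hgb : S.gam k b ∈ S.faces k := hS.1.1 k b hb
    have h1 : φ.f k (S.gam k a) = φ.f k (S.gam k b) := by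
      rw [← φ.gam_comm k a ha, ← φ.gam_comm k b hb, hfe]
    have hge := ih _ _ hga hgb h1
    rcases (hS.2.2.2.2.2.2 k (S.gam k a)).1 a b ha hb rfl hge.symm with h | h | h
    · exact h
    · have := hom_ltPlus φ (k+1) h
      rw [hfe] at this
      exact absurd this (hT.2.2.2.1 (k+1) _ (φ.mem _ b hb))
    · have := hom_ltPlus φ (k+1) h
      rw [hfe] at this
      exact absurd this (hT.2.2.2.1 (k+1) _ (φ.mem _ b hb))

lemma orbit_contra {α : Type*} (r : α → α → Prop)
    (htr : ∀ x y z, r x y → r y z → r x z)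
    (g : α → α) (hg : ∀ x y, r x y → r (g x) (g y)) (a : α) (m : ℕ)
    (hm : 1 ≤ m) (hfix : g^[m] a = a) (h : r a (g a)) : r a a := by
  have step : ∀ n, r (g^[n] a) (g^[n+1] a) := by
    intro n; induction n with
    | zero => simpa using h
    | succ n ih =>
      have := hg _ _ ih
      simpa [Function.iterate_succ_apply'] using this
  have chain : ∀ n, r a (g^[n+1] a) := by
    intro n; induction n with
    | zero => simpa using h
    | succ n ih => exact htr _ _ _ ih (step (n+1))
  have := chain (m - 1)
  rwa [Nat.sub_add_cancel hm, hfix] at this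

lemma period {S : PreHG} (ψ : HGHom S S)
    (hinj : ∀ k a b, a ∈ S.faces k → b ∈ S.faces k → ψ.f k a = ψ.f k b → a = b)
    (k : ℕ) (a : ℕ) (ha : a ∈ S.faces k) :
    ∃ m, 1 ≤ m ∧ (ψ.f k)^[m] a = a := by
  have hmem : ∀ n, (ψ.f k)^[n] a ∈ S.faces k := by
    intro n; induction n with
    | zero => simpa using ha
    | succ n ih => rw [Function.iterate_succ_apply']; exact ψ.mem k _ ih
  have hinj' : ∀ i x y, x ∈ S.faces k → y ∈ S.faces k →
      (ψ.f k)^[i] x = (ψ.f k)^[i] y → x = y := by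
    intro i; induction i with
    | zero => intro x y _ _ h; simpa using h
    | succ i ih =>
      intro x y hx hy h
      rw [Function.iterate_succ_apply, Function.iterate_succ_apply] at h
      exact hinj k x y hx hy (ih _ _ (ψ.mem k x hx) (ψ.mem k y hy) h)
  have key : ∀ i j, i < j → (ψ.f k)^[i] a = (ψ.f k)^[j] a →
      ∃ m, 1 ≤ m ∧ (ψ.f k)^[m] a = a := by
    intro i j hij he
    refine ⟨j - i, by omega, ?_⟩
    have : (ψ.f k)^[i] ((ψ.f k)^[j-i] a) = (ψ.f k)^[i] a := by
      rw [← Function.iterate_add_apply, Nat.add_sub_cancel' (le_of_lt hij)]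
      exact he.symm
    exact hinj' i _ _ (hmem _) ha this
  obtain ⟨i, -, j, -, hij, he⟩ :=
    Finset.exists_ne_map_eq_of_card_lt_of_maps_to
      (s := Finset.range ((S.faces k).card + 1)) (t := S.faces k)
      (by simp) (fun n _ => hmem n)
  rcases Nat.lt_or_ge i j with hlt | hge
  · exact key i j hlt he
  · exact key j i (by omega) he.symm

lemma no_perp {S : PreHG} (hS : S.IsPFS) (ψ : HGHom S S)
    (hinj : ∀ k a b, a ∈ S.faces k → b ∈ S.faces k → ψ.f k a = ψ.f k b → a = b)
    (k a : ℕ) (ha : a ∈ S.faces k)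
    (h : S.perpPlus k a (ψ.f k a)) : False := by
  obtain ⟨m, hm, hfix⟩ := period ψ hinj k a ha
  have strict := hS.2.2.2.1 k a ha
  rcases h with h | h
  · exact strict (orbit_contra (S.ltPlus k) (fun _ _ _ h1 h2 => h1.trans h2) (ψ.f k)
      (fun x y hxy => hom_ltPlus ψ k hxy) a m hm hfix h)
  · exact strict (orbit_contra (Function.swap (S.ltPlus k))
      (fun _ _ _ h1 h2 => Relation.TransGen.trans h2 h1) (ψ.f k)
      (fun x y hxy => hom_ltPlus ψ k hxy) a m hm hfix h)

end Stmt14Aux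

open Stmt14Aux in
/-- Every morphism of positive face structures is injective in each
dimension, and every automorphism is the identity. -/
theorem stmt14 (S T : PreHG) (hS : S.IsPFS) (hT : T.IsPFS) (φ : HGHom S T) :
    (∀ k a b, a ∈ S.faces k → b ∈ S.faces k → φ.f k a = φ.f k b → a = b) ∧
    (∀ ψ : HGHom S S, (∀ k, ∀ b ∈ S.faces k, ∃ a ∈ S.faces k, ψ.f k a = b) →
      ∀ k, ∀ a ∈ S.faces k, ψ.f k a = a) := by
  refine ⟨hom_inj hS hT φ, ?_⟩
  intro ψ _hsurj
  have hinj := hom_inj hS hS ψ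
  intro k
  induction k with
  | zero =>
    intro a ha
    have hpsi := ψ.mem 0 a ha
    rcases hS.2.2.2.2.1 a ha (ψ.f 0 a) hpsi with h | h | h
    · exact h.symm
    · exact absurd (Or.inl h : S.perpPlus 0 a (ψ.f 0 a)) (no_perp hS ψ hinj 0 a ha)
    · exact absurd (Or.inr h : S.perpPlus 0 a (ψ.f 0 a)) (no_perp hS ψ hinj 0 a ha)
  | succ k ih =>
    intro a ha
    have hpsi := ψ.mem (k+1) a ha
    have hg : S.gam k (ψ.f (k+1) a) = S.gam k a := by
      rw [ψ.gam_comm k a ha, ih (S.gam k a) (hS.1.1 k a ha)]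
    rcases (hS.2.2.2.2.2.2 k (S.gam k a)).1 a (ψ.f (k+1) a) ha hpsi rfl hg
      with h | h
    · exact h.symm
    · exact absurd h (no_perp hS ψ hinj (k+1) a ha)
end

section
/- Let S be a positive face structure, a, b ∈ S_k, and α ∈ S_{k+1} a <⁺-minimal element of S_{k+1} with a ∈ δ(α) and b = γ(α). Then b is the immediate <⁺-successor of a: a <⁺ b and there is no c ∈ S_k with a <⁺ c <⁺ b. -/
namespace PreHG

/-- Every `<⁺`-chain from `x` to `y` has a first cell `σ` (with `x ∈ δ(σ)`) and a
last cell `τ` (with `γ(τ) = y`), `σ ≤⁻ τ`, and `γ(σ) ≤⁺ y`. -/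
lemma lastCell (S : PreHG) (k : ℕ) {x y : ℕ} (h : S.ltPlus k x y) :
    ∃ σ τ, σ ∈ S.faces (k+1) ∧ τ ∈ S.faces (k+1) ∧ x ∈ S.del k σ ∧ S.gam k τ = y ∧
      (σ = τ ∨ S.ltMinus (k+1) σ τ) ∧ (S.gam k σ = y ∨ S.ltPlus k (S.gam k σ) y) := by
  induction h with
  | single h =>
    obtain ⟨σ, hσ, hx, hγ⟩ := h
    exact ⟨σ, σ, hσ, hσ, hx, hγ, Or.inl rfl, Or.inl hγ⟩
  | @tail y' y hchain hr ih =>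
    obtain ⟨ρ, hρ, hy', hγρ⟩ := hr
    obtain ⟨σ, τ, hσ, hτ, hx, hγτ, hστ, hγσ⟩ := ih
    have hτρ : S.ltMinusOne (k+1) τ ρ := ⟨hτ, hρ, by rw [hγτ]; exact hy'⟩
    have hone : S.ltPlusOne k y' y := ⟨ρ, hρ, hy', hγρ⟩
    refine ⟨σ, ρ, hσ, hρ, hx, hγρ, ?_, ?_⟩
    · rcases hστ with rfl | hlt
      · exact Or.inr (Relation.TransGen.single hτρ)
      · exact Or.inr (hlt.tail hτρ)
    · rcases hγσ with heq | hlt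
      · exact Or.inr (Relation.TransGen.single (by rw [heq]; exact hone))
      · exact Or.inr (hlt.tail hone)

/-- Two faces in the domain of one cell are never `<⁺`-comparable. -/
lemma noDelCompare (S : PreHG) (hS : S.IsPFS) (k : ℕ) {β x y : ℕ}
    (hβ : β ∈ S.faces (k+1)) (hx : x ∈ S.del k β) (hy : y ∈ S.del k β) :
    ¬ S.ltPlus k x y := by
  intro h
  obtain ⟨⟨-, hδf, -, -, -⟩, -, -, hStrict, -, hDisj, hPencil⟩ := hS
  obtain ⟨σ, τ, hσ, hτ, hxσ, hγτ, hστ, hγσ⟩ := S.lastCell k h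
  have hyk : y ∈ S.faces k := hδf k β hβ hy
  have hyy : ¬ S.ltPlus k y y := hStrict k y hyk
  by_cases hτβ : τ = β
  · subst hτβ
    exact hyy (Relation.TransGen.single ⟨τ, hβ, hy, hγτ⟩)
  · rcases (hPencil k x).2 σ β hσ hβ hxσ hx with rfl | hperp
    · -- σ = β
      have hyb : S.ltPlusOne k y (S.gam k σ) := ⟨σ, hβ, hy, rfl⟩
      rcases hγσ with heq | hlt
      · rw [heq] at hyb
        exact hyy (Relation.TransGen.single hyb)
      · exact hyy ((Relation.TransGen.single hyb).trans hlt)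
    · have hτβm : S.ltMinusOne (k+1) τ β := ⟨hτ, hβ, by rw [hγτ]; exact hy⟩
      have hσβm : S.ltMinus (k+1) σ β := by
        rcases hστ with rfl | hlt
        · exact Relation.TransGen.single hτβm
        · exact hlt.tail hτβm
      exact hDisj k σ β hσ hβ ⟨hperp, Or.inl hσβm⟩

/-- One-step domain descent: if `α' ∈ δ(τ)` and `x ∈ δ(α')` then some `y ≤⁺ x`
belongs to `δ(γ(τ))`. -/
lemma stepDescend (S : PreHG) (hS : S.IsPFS) (k : ℕ) {τ : ℕ} (hτ : τ ∈ S.faces (k+2)) :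
    ∀ n x α', {z | z ∈ S.faces k ∧ S.ltPlus k z x}.ncard < n →
      α' ∈ S.del (k+1) τ → x ∈ S.del k α' →
      ∃ y ∈ S.del k (S.gam (k+1) τ), y = x ∨ S.ltPlus k y x := by
  obtain ⟨⟨-, hδf, hδne, -, -⟩, -, hGlob, hStrict, -, -, -⟩ := hS
  intro n
  induction n with
  | zero => intro x α' hcard; omega
  | succ n ih =>
    intro x α' hcard hα' hx
    by_cases hmem : x ∈ S.del k (S.gam (k+1) τ)
    · exact ⟨x, hmem, Or.inl rfl⟩
    · have hglob := (hGlob k τ hτ).2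
      have hxdd : x ∈ S.delS k (S.del (k+1) τ) := Finset.mem_biUnion.2 ⟨α', hα', hx⟩
      have hxg : x ∈ S.gamS k (S.del (k+1) τ) := by
        by_contra hng
        exact hmem (hglob ▸ Finset.mem_sdiff.2 ⟨hxdd, hng⟩)
      obtain ⟨α'', hα'', hγ⟩ := Finset.mem_image.1 hxg
      have hα''f : α'' ∈ S.faces (k+1) := hδf (k+1) τ hτ hα''
      obtain ⟨x'', hx''⟩ := hδne k α'' hα''f
      have hstep : S.ltPlus k x'' x := Relation.TransGen.single ⟨α'', hα''f, hx'', hγ⟩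
      have hx''f : x'' ∈ S.faces k := hδf k α'' hα''f hx''
      have hfin : {z | z ∈ S.faces k ∧ S.ltPlus k z x}.Finite :=
        (S.faces k).finite_toSet.subset (fun z hz => hz.1)
      have hlt : {z | z ∈ S.faces k ∧ S.ltPlus k z x''}.ncard
          < {z | z ∈ S.faces k ∧ S.ltPlus k z x}.ncard := by
        apply Set.ncard_lt_ncard _ hfin
        constructor
        · rintro z ⟨hz1, hz2⟩
          exact ⟨hz1, hz2.trans hstep⟩
        · intro hsub
          exact hStrict k x'' hx''f (hsub ⟨hx''f, hstep⟩).2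
      obtain ⟨y, hy, hyx⟩ := ih x'' α'' (by omega) hα'' hx''
      refine ⟨y, hy, Or.inr ?_⟩
      rcases hyx with rfl | hylt
      · exact hstep
      · exact hylt.trans hstep

/-- Domain descent along `<⁺` one dimension up: if `α <⁺ β` and `x ∈ δ(α)`, then
some `y ≤⁺ x` belongs to `δ(β)`. -/
lemma delDescend (S : PreHG) (hS : S.IsPFS) (k : ℕ) {α β : ℕ}
    (h : S.ltPlus (k+1) α β) :
    ∀ x ∈ S.del k α, ∃ y ∈ S.del k β, y = x ∨ S.ltPlus k y x := by
  induction h with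
  | single h =>
    obtain ⟨τ, hτ, hατ, hγ⟩ := h
    intro x hx
    obtain ⟨y, hy, hyx⟩ := S.stepDescend hS k hτ
      ({z | z ∈ S.faces k ∧ S.ltPlus k z x}.ncard + 1) x α (Nat.lt_succ_self _) hατ hx
    rw [hγ] at hy
    exact ⟨y, hy, hyx⟩
  | @tail β' β hchain hr ih =>
    intro x hx
    obtain ⟨y, hy, hyx⟩ := ih x hx
    obtain ⟨τ, hτ, hβ'τ, hγ⟩ := hr
    obtain ⟨z, hz, hzy⟩ := S.stepDescend hS k hτ
      ({w | w ∈ S.faces k ∧ S.ltPlus k w y}.ncard + 1) y β' (Nat.lt_succ_self _) hβ'τ hy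
    rw [hγ] at hz
    refine ⟨z, hz, ?_⟩
    rcases hzy with rfl | hzlt
    · exact hyx
    · rcases hyx with rfl | hylt
      · exact Or.inr hzlt
      · exact Or.inr (hzlt.trans hylt)

end PreHG

/-- If `α` is `<⁺`-minimal in `S_{k+1}`, `a ∈ δ(α)` and `b = γ(α)`,
then `b` is the immediate `<⁺`-successor of `a`. -/
theorem stmt16 (S : PreHG) (hS : S.IsPFS) (k a b α : ℕ)
    (hα : α ∈ S.faces (k+1))
    (hmin : ∀ β ∈ S.faces (k+1), ¬ S.ltPlus (k+1) β α)
    (haα : a ∈ S.del k α) (hbα : b = S.gam k α) :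
    S.ltPlus k a b ∧ ¬ ∃ c ∈ S.faces k, S.ltPlus k a c ∧ S.ltPlus k c b := by
  constructor
  · exact Relation.TransGen.single ⟨α, hα, haα, hbα.symm⟩
  · rintro ⟨c, hc, hac, hcb⟩
    obtain ⟨d, hcd, hdb⟩ := (Relation.TransGen.tail'_iff).1 hcb
    obtain ⟨τ, hτ, hd, hγτ⟩ := hdb
    have had : S.ltPlus k a d := by
      rcases (Relation.reflTransGen_iff_eq_or_transGen.1 hcd) with h | h
      · exact h ▸ hac
      · exact hac.trans h
    have hpencil := hS.2.2.2.2.2.2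
    rcases (hpencil k b).1 τ α hτ hα hγτ hbα.symm with rfl | hperp
    · exact S.noDelCompare hS k hα haα hd had
    · rcases hperp with h1 | h2
      · exact hmin τ hτ h1
      · obtain ⟨y, hy, hya⟩ := S.delDescend hS k h2 a haα
        have hyd : S.ltPlus k y d := by
          rcases hya with rfl | hlt
          · exact had
          · exact hlt.trans had
        exact S.noDelCompare hS k hτ hy hd hyd
end

section
/- Let S be a positive face structure and k > 0. Then δ(S_k) = δ(S_k − γ(S_{k+1})), i.e. every face that is in the domain of somebody is in the domain of some face that is not a codomain. Similarly γ(S_k) = γ(S_k − γ(S_{k+1})), and δ(S_k) = δ(S_k − δ(S_{k+1})) ∪ ι(S_{k+1}). -/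
/-- For `k > 0`: `δ(S_k) = δ(S_k − γ(S_{k+1}))`,
`γ(S_k) = γ(S_k − γ(S_{k+1}))`, and `δ(S_k) = δ(S_k − δ(S_{k+1})) ∪ ι(S_{k+1})`. -/
theorem stmt18 (S : PreHG) (hS : S.IsPFS) (k : ℕ) :
    S.delS k (S.faces (k+1)) =
      S.delS k (S.faces (k+1) \ S.gamS (k+1) (S.faces (k+2))) ∧
    S.gamS k (S.faces (k+1)) =
      S.gamS k (S.faces (k+1) \ S.gamS (k+1) (S.faces (k+2))) ∧
    S.delS k (S.faces (k+1)) =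
      S.delS k (S.faces (k+1) \ S.delS (k+1) (S.faces (k+2))) ∪
        (S.faces (k+2)).biUnion (S.iota k) := by
  classical
  obtain ⟨⟨hgam, hdel, -, -, -⟩, -, hGlob, hStrict, -⟩ := hS
  set F := S.faces (k+1) with hF
  have hmemOne : ∀ a b, S.ltPlusOne (k+1) a b → a ∈ F ∧ b ∈ F := by
    rintro a b ⟨α, hα, haα, rfl⟩
    exact ⟨hdel _ _ hα haα, hgam _ _ hα⟩
  -- downward measure decreases
  have hdown_lt : ∀ a b, b ∈ F → S.ltPlusOne (k+1) a b →
      (F.filter (fun c => S.ltPlus (k+1) c a)).card <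
        (F.filter (fun c => S.ltPlus (k+1) c b)).card := by
    intro a b hbF hab
    apply Finset.card_lt_card
    rw [Finset.ssubset_def]
    constructor
    · intro c hc
      rw [Finset.mem_filter] at *
      exact ⟨hc.1, hc.2.tail hab⟩
    · intro hsub
      have haF : a ∈ F := (hmemOne _ _ hab).1
      have h1 : a ∈ F.filter (fun c => S.ltPlus (k+1) c b) :=
        Finset.mem_filter.mpr ⟨haF, Relation.TransGen.single hab⟩
      have h2 := hsub h1
      rw [Finset.mem_filter] at h2
      exact hStrict (k+1) a haF h2.2
  -- upward measure decreases
  have hup_lt : ∀ a b, a ∈ F → S.ltPlusOne (k+1) a b →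
      (F.filter (fun c => S.ltPlus (k+1) b c)).card <
        (F.filter (fun c => S.ltPlus (k+1) a c)).card := by
    intro a b haF hab
    apply Finset.card_lt_card
    rw [Finset.ssubset_def]
    constructor
    · intro c hc
      rw [Finset.mem_filter] at *
      exact ⟨hc.1, hc.2.head hab⟩
    · intro hsub
      have hbF : b ∈ F := (hmemOne _ _ hab).2
      have h1 : b ∈ F.filter (fun c => S.ltPlus (k+1) a c) :=
        Finset.mem_filter.mpr ⟨hbF, Relation.TransGen.single hab⟩
      have h2 := hsub h1
      rw [Finset.mem_filter] at h2
      exact hStrict (k+1) b hbF h2.2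
  have claim1 : ∀ n a, a ∈ F → (F.filter (fun c => S.ltPlus (k+1) c a)).card < n →
      ∀ x ∈ S.del k a, x ∈ S.delS k (F \ S.gamS (k+1) (S.faces (k+2))) := by
    intro n
    induction n with
    | zero => intro a _ hcard; omega
    | succ n ih =>
      intro a haF hcard x hx
      by_cases hga : a ∈ S.gamS (k+1) (S.faces (k+2))
      · obtain ⟨α, hα, rfl⟩ := Finset.mem_image.mp hga
        have hglob := (hGlob k α hα).2
        rw [hglob, Finset.mem_sdiff] at hx
        obtain ⟨b, hbα, hxb⟩ := Finset.mem_biUnion.mp hx.1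
        have hbF : b ∈ F := hdel _ _ hα hbα
        have hstep : S.ltPlusOne (k+1) b (S.gam (k+1) α) := ⟨α, hα, hbα, rfl⟩
        have := hdown_lt b _ haF hstep
        exact ih b hbF (by omega) x hxb
      · exact Finset.mem_biUnion.mpr ⟨a, Finset.mem_sdiff.mpr ⟨haF, hga⟩, hx⟩
  have claim2 : ∀ n a, a ∈ F → (F.filter (fun c => S.ltPlus (k+1) c a)).card < n →
      S.gam k a ∈ S.gamS k (F \ S.gamS (k+1) (S.faces (k+2))) := by
    intro n
    induction n with
    | zero => intro a _ hcard; omega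
    | succ n ih =>
      intro a haF hcard
      by_cases hga : a ∈ S.gamS (k+1) (S.faces (k+2))
      · obtain ⟨α, hα, rfl⟩ := Finset.mem_image.mp hga
        have hglob := (hGlob k α hα).1
        have hmem : S.gam k (S.gam (k+1) α) ∈
            S.gamS k (S.del (k+1) α) \ S.delS k (S.del (k+1) α) := by
          rw [← hglob]; exact Finset.mem_singleton_self _
        obtain ⟨b, hbα, hgb⟩ := Finset.mem_image.mp (Finset.mem_sdiff.mp hmem).1
        have hbF : b ∈ F := hdel _ _ hα hbα
        have hstep : S.ltPlusOne (k+1) b (S.gam (k+1) α) := ⟨α, hα, hbα, rfl⟩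
        have := hdown_lt b _ haF hstep
        have := ih b hbF (by omega)
        rwa [hgb] at this
      · exact Finset.mem_image.mpr ⟨a, Finset.mem_sdiff.mpr ⟨haF, hga⟩, rfl⟩
  have claim3 : ∀ n a, a ∈ F → (F.filter (fun c => S.ltPlus (k+1) a c)).card < n →
      ∀ x ∈ S.del k a, x ∈ S.delS k (F \ S.delS (k+1) (S.faces (k+2))) ∪
        (S.faces (k+2)).biUnion (S.iota k) := by
    intro n
    induction n with
    | zero => intro a _ hcard; omega
    | succ n ih =>
      intro a haF hcard x hx
      by_cases hda : a ∈ S.delS (k+1) (S.faces (k+2))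
      · obtain ⟨α, hα, haα⟩ := Finset.mem_biUnion.mp hda
        have hxd : x ∈ S.delS k (S.del (k+1) α) := Finset.mem_biUnion.mpr ⟨a, haα, hx⟩
        by_cases hxg : x ∈ S.gamS k (S.del (k+1) α)
        · exact Finset.mem_union_right _ (Finset.mem_biUnion.mpr
            ⟨α, hα, Finset.mem_inter.mpr ⟨hxd, hxg⟩⟩)
        · have hglob := (hGlob k α hα).2
          have hxb : x ∈ S.del k (S.gam (k+1) α) := by
            rw [hglob]; exact Finset.mem_sdiff.mpr ⟨hxd, hxg⟩
          have hbF : S.gam (k+1) α ∈ F := hgam _ _ hα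
          have hstep : S.ltPlusOne (k+1) a (S.gam (k+1) α) := ⟨α, hα, haα, rfl⟩
          have := hup_lt a _ haF hstep
          exact ih _ hbF (by omega) x hxb
      · exact Finset.mem_union_left _
          (Finset.mem_biUnion.mpr ⟨a, Finset.mem_sdiff.mpr ⟨haF, hda⟩, hx⟩)
  refine ⟨?_, ?_, ?_⟩
  · apply Finset.Subset.antisymm
    · intro x hx
      obtain ⟨a, haF, hxa⟩ := Finset.mem_biUnion.mp hx
      exact claim1 _ a haF (Nat.lt_succ_self _) x hxa
    · intro x hx
      obtain ⟨a, ha, hxa⟩ := Finset.mem_biUnion.mp hx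
      exact Finset.mem_biUnion.mpr ⟨a, (Finset.mem_sdiff.mp ha).1, hxa⟩
  · apply Finset.Subset.antisymm
    · intro x hx
      obtain ⟨a, haF, rfl⟩ := Finset.mem_image.mp hx
      exact claim2 _ a haF (Nat.lt_succ_self _)
    · intro x hx
      obtain ⟨a, ha, hxa⟩ := Finset.mem_image.mp hx
      exact Finset.mem_image.mpr ⟨a, (Finset.mem_sdiff.mp ha).1, hxa⟩
  · apply Finset.Subset.antisymm
    · intro x hx
      obtain ⟨a, haF, hxa⟩ := Finset.mem_biUnion.mp hx
      exact claim3 _ a haF (Nat.lt_succ_self _) x hxa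
    · intro x hx
      rcases Finset.mem_union.mp hx with h | h
      · obtain ⟨a, ha, hxa⟩ := Finset.mem_biUnion.mp h
        exact Finset.mem_biUnion.mpr ⟨a, (Finset.mem_sdiff.mp ha).1, hxa⟩
      · obtain ⟨α, hα, hxι⟩ := Finset.mem_biUnion.mp h
        have hxd := (Finset.mem_inter.mp hxι).1
        obtain ⟨b, hbα, hxb⟩ := Finset.mem_biUnion.mp hxd
        exact Finset.mem_biUnion.mpr ⟨b, hdel _ _ hα hbα, hxb⟩
end
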